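/- arXiv:math/0508331 — 6 statements merged into one kernel-verified Lean document; each statement's English description precedes it below -/
import Mathlib

section
/- Let X ⊆ ℂ^n and let A₁ and A₂ be algebraic sets in ℂ^n such that X is determining for A₁ and X is determining for A₂. If A₁ ∩ X = A₂ ∩ X, then A₁ = A₂. -/
open MvPolynomial

noncomputable section

/-- The `n`-torus `𝕋ⁿ ⊆ ℂⁿ`. -/
def torus (n : ℕ) : Set (Fin n → ℂ) := {z | ∀ i, ‖z i‖ = 1}

/-- The open unit polydisk `𝔻ⁿ ⊆ ℂⁿ`. -/
def polydisk (n : ℕ) : Set (Fin n → ℂ) := {z | ∀ i, ‖z i‖ < 1}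

/-- `𝔼ⁿ`, the product of the exteriors of the closed unit disk. -/
def polyExt (n : ℕ) : Set (Fin n → ℂ) := {z | ∀ i, 1 < ‖z i‖}

/-- The zero set `Z_p ⊆ ℂⁿ` of a polynomial `p ∈ ℂ[z₁,…,zₙ]`. -/
def zeroSet {n : ℕ} (p : MvPolynomial (Fin n) ℂ) : Set (Fin n → ℂ) :=
  {z | eval z p = 0}

/-- An algebraic set in `ℂⁿ` is a finite intersection of zero sets of polynomials. -/
def IsAlgebraicSet {n : ℕ} (A : Set (Fin n → ℂ)) : Prop :=
  ∃ S : Finset (MvPolynomial (Fin n) ℂ), A = ⋂ p ∈ S, zeroSet p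

/-- `f` belongs to `Hol(A)`: at every point of `A`, `f` agrees on `A` with a function
holomorphic on an open neighborhood in `ℂⁿ`. -/
def HolOn {n : ℕ} (A : Set (Fin n → ℂ)) (f : (Fin n → ℂ) → ℂ) : Prop :=
  ∀ x ∈ A, ∃ U : Set (Fin n → ℂ), IsOpen U ∧ x ∈ U ∧
    ∃ g : (Fin n → ℂ) → ℂ, DifferentiableOn ℂ g U ∧ Set.EqOn g f (U ∩ A)

/-- `X` is determining for `A`: the only `f ∈ Hol(A)` vanishing on `X ∩ A` vanishes on `A`. -/
def IsDetermining {n : ℕ} (X A : Set (Fin n → ℂ)) : Prop :=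
  ∀ f : (Fin n → ℂ) → ℂ, HolOn A f → (∀ z ∈ X ∩ A, f z = 0) → ∀ z ∈ A, f z = 0

/-- A variety: an algebraic set that is not a finite union of strictly smaller algebraic sets. -/
def IsVariety {n : ℕ} (V : Set (Fin n → ℂ)) : Prop :=
  IsAlgebraicSet V ∧
    ¬ ∃ (m : ℕ) (B : Fin m → Set (Fin n → ℂ)),
        (∀ i, IsAlgebraicSet (B i) ∧ B i ⊂ V) ∧ V = ⋃ i, B i

/-- `C` is an irreducible component of `A`: `A` is a finite union of varieties,
none containing another, one of which is `C`. -/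
def IsIrredComponent {n : ℕ} (C A : Set (Fin n → ℂ)) : Prop :=
  ∃ (m : ℕ) (V : Fin m → Set (Fin n → ℂ)),
    (∀ i, IsVariety (V i)) ∧
    (∀ i j, i ≠ j → ¬ V i ⊆ V j) ∧
    A = ⋃ i, V i ∧ ∃ i, C = V i

/-- A toral algebraic set: an algebraic set for which `𝕋ⁿ` is determining. -/
def IsToral {n : ℕ} (A : Set (Fin n → ℂ)) : Prop :=
  IsAlgebraicSet A ∧ IsDetermining (torus n) A

/-- An atoral algebraic set: an algebraic set none of whose irreducible components
has `𝕋ⁿ` determining for it. -/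
def IsAtoral {n : ℕ} (A : Set (Fin n → ℂ)) : Prop :=
  IsAlgebraicSet A ∧ ∀ C, IsIrredComponent C A → ¬ IsDetermining (torus n) C

/-- A toral polynomial. -/
def IsToralPoly {n : ℕ} (p : MvPolynomial (Fin n) ℂ) : Prop := IsToral (zeroSet p)

/-- An atoral polynomial. -/
def IsAtoralPoly {n : ℕ} (p : MvPolynomial (Fin n) ℂ) : Prop := IsAtoral (zeroSet p)

/-- The reflection `p^~(z) = z^d ⬝ conj (p (1/z̄))`, where `d` is the multidegree of `p`:
the coefficient of `z^a` in `p` becomes, conjugated, the coefficient of `z^{d-a}`. -/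
def reflectPoly {n : ℕ} (p : MvPolynomial (Fin n) ℂ) : MvPolynomial (Fin n) ℂ :=
  ∑ a ∈ p.support,
    monomial (Finsupp.equivFunOnFinite.symm fun i => p.degreeOf i - a i)
      (starRingEnd ℂ (p.coeff a))

/-- Two polynomials are relatively prime if every common divisor is a unit. -/
def RelPrimePoly {n : ℕ} (a b : MvPolynomial (Fin n) ℂ) : Prop :=
  ∀ d : MvPolynomial (Fin n) ℂ, d ∣ a → d ∣ b → IsUnit d

/-- The set of isolated points of `A`. -/
def isolatedPoints {n : ℕ} (A : Set (Fin n → ℂ)) : Set (Fin n → ℂ) :=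
  {x | x ∈ A ∧ ∃ U : Set (Fin n → ℂ), IsOpen U ∧ x ∈ U ∧ U ∩ A = {x}}

lemma eval_differentiable {n : ℕ} (p : MvPolynomial (Fin n) ℂ) :
    Differentiable ℂ (fun z : Fin n → ℂ => eval z p) := by
  induction p using MvPolynomial.induction_on with
  | C a => simpa using differentiable_const a
  | add p q hp hq => simp only [map_add]; exact hp.add hq
  | mul_X p i hp => simp only [map_mul, eval_X]; exact hp.mul (differentiable_apply i)

lemma subset_aux {n : ℕ} {X A₁ A₂ : Set (Fin n → ℂ)}
    (hA₂ : IsAlgebraicSet A₂) (hX₁ : IsDetermining X A₁)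
    (h : A₁ ∩ X = A₂ ∩ X) : A₁ ⊆ A₂ := by
  obtain ⟨S, rfl⟩ := hA₂
  intro z hz
  simp only [Set.mem_iInter]
  intro p hp
  have := hX₁ (fun z => eval z p) ?_ ?_ z hz
  · exact this
  · intro x _
    exact ⟨Set.univ, isOpen_univ, trivial, _, (eval_differentiable p).differentiableOn,
      fun y _ => rfl⟩
  · intro w hw
    have : w ∈ (⋂ p ∈ S, zeroSet p) ∩ X := by
      rw [← h]; exact ⟨hw.2, hw.1⟩
    have hw2 : w ∈ zeroSet p := by
      have := this.1
      simp only [Set.mem_iInter] at this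
      exact this p hp
    exact hw2

/-- If `X` is determining for algebraic sets `A₁` and `A₂`, and
`A₁ ∩ X = A₂ ∩ X`, then `A₁ = A₂`. -/
theorem statement0 {n : ℕ} (X A₁ A₂ : Set (Fin n → ℂ))
    (hA₁ : IsAlgebraicSet A₁) (hA₂ : IsAlgebraicSet A₂)
    (hX₁ : IsDetermining X A₁) (hX₂ : IsDetermining X A₂)
    (h : A₁ ∩ X = A₂ ∩ X) : A₁ = A₂ :=
  Set.Subset.antisymm (subset_aux hA₂ hX₁ h) (subset_aux hA₁ hX₂ h.symm)
end
end

section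
/- A finite union of toral algebraic sets in ℂ^n is a toral algebraic set, and a finite union of atoral algebraic sets in ℂ^n is an atoral algebraic set. -/
open MvPolynomial

noncomputable section

section Aux

variable {n : ℕ}

lemma algebraic_empty : IsAlgebraicSet (∅ : Set (Fin n → ℂ)) := by
  refine ⟨{1}, ?_⟩
  simp [zeroSet, Set.eq_empty_iff_forall_notMem]

lemma algebraic_inter {A B : Set (Fin n → ℂ)} (hA : IsAlgebraicSet A) (hB : IsAlgebraicSet B) :
    IsAlgebraicSet (A ∩ B) := by
  classical
  obtain ⟨S, rfl⟩ := hA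
  obtain ⟨T, rfl⟩ := hB
  refine ⟨S ∪ T, ?_⟩
  ext z
  simp only [Set.mem_inter_iff, Set.mem_iInter, Finset.mem_union]
  constructor
  · rintro ⟨h1, h2⟩ p (hp | hp)
    · exact h1 p hp
    · exact h2 p hp
  · intro h
    exact ⟨fun p hp => h p (Or.inl hp), fun p hp => h p (Or.inr hp)⟩

lemma algebraic_union {A B : Set (Fin n → ℂ)} (hA : IsAlgebraicSet A) (hB : IsAlgebraicSet B) :
    IsAlgebraicSet (A ∪ B) := by
  classical
  obtain ⟨S, rfl⟩ := hA
  obtain ⟨T, rfl⟩ := hB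
  refine ⟨(S ×ˢ T).image (fun pq => pq.1 * pq.2), ?_⟩
  ext z
  simp only [Set.mem_union, Set.mem_iInter, Finset.mem_image, Finset.mem_product, zeroSet,
    Set.mem_setOf_eq, Prod.exists]
  constructor
  · rintro (h | h) r ⟨p, q, ⟨hp, hq⟩, rfl⟩
    · rw [map_mul, h p hp, zero_mul]
    · rw [map_mul, h q hq, mul_zero]
  · intro h
    by_cases hS : ∀ p ∈ S, eval z p = 0
    · exact Or.inl hS
    · push_neg at hS
      obtain ⟨p, hp, hpz⟩ := hS
      refine Or.inr fun q hq => ?_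
      have := h (p * q) ⟨p, q, ⟨hp, hq⟩, rfl⟩
      rw [map_mul] at this
      exact (mul_eq_zero.mp this).resolve_left hpz

lemma algebraic_iUnion : ∀ {m : ℕ} (A : Fin m → Set (Fin n → ℂ)),
    (∀ i, IsAlgebraicSet (A i)) → IsAlgebraicSet (⋃ i, A i) := by
  intro m
  induction m with
  | zero =>
    intro A _
    rw [Set.iUnion_of_empty]
    exact algebraic_empty
  | succ m ih =>
    intro A hA
    have hsplit : (⋃ i, A i) = A 0 ∪ ⋃ i : Fin m, A i.succ := by
      ext z
      simp only [Set.mem_iUnion, Set.mem_union]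
      constructor
      · rintro ⟨i, hi⟩
        rcases Fin.eq_zero_or_eq_succ i with h0 | ⟨j, rfl⟩
        · exact Or.inl (h0 ▸ hi)
        · exact Or.inr ⟨j, hi⟩
      · rintro (h | ⟨j, hj⟩)
        · exact ⟨0, h⟩
        · exact ⟨j.succ, hj⟩
    rw [hsplit]
    exact algebraic_union (hA 0) (ih _ fun i => hA i.succ)

/-- The vanishing ideal of a set. -/
def vIdeal (A : Set (Fin n → ℂ)) : Ideal (MvPolynomial (Fin n) ℂ) where
  carrier := {p | ∀ z ∈ A, eval z p = 0}
  add_mem' := by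
    intro p q hp hq z hz
    rw [map_add, hp z hz, hq z hz, add_zero]
  zero_mem' := by intro z _; simp
  smul_mem' := by
    intro c p hp z hz
    rw [smul_eq_mul, map_mul, hp z hz, mul_zero]

lemma mem_vIdeal {A : Set (Fin n → ℂ)} {p : MvPolynomial (Fin n) ℂ} :
    p ∈ vIdeal A ↔ ∀ z ∈ A, eval z p = 0 := Iff.rfl

lemma vIdeal_antitone {A B : Set (Fin n → ℂ)} (h : A ⊆ B) : vIdeal B ≤ vIdeal A :=
  fun _ hp z hz => hp z (h hz)

lemma subset_of_vIdeal_le {A B : Set (Fin n → ℂ)} (hA : IsAlgebraicSet A)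
    (h : vIdeal A ≤ vIdeal B) : B ⊆ A := by
  obtain ⟨S, rfl⟩ := hA
  intro z hz
  simp only [Set.mem_iInter]
  intro p hp
  have hpv : p ∈ vIdeal (⋂ q ∈ S, zeroSet q) := by
    intro w hw
    simp only [Set.mem_iInter] at hw
    exact hw p hp
  exact h hpv z hz

lemma vIdeal_lt_of_ssubset {A B : Set (Fin n → ℂ)} (hA : IsAlgebraicSet A)
    (h : A ⊂ B) : vIdeal B < vIdeal A := by
  refine lt_of_le_of_ne (vIdeal_antitone h.1) fun he => ?_
  exact h.2 (subset_of_vIdeal_le hA he.ge)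

/-- The well-founded relation of strict inclusion of algebraic sets. -/
def algLT (A B : Set (Fin n → ℂ)) : Prop :=
  IsAlgebraicSet A ∧ IsAlgebraicSet B ∧ A ⊂ B

lemma algLT_wf : WellFounded (algLT (n := n)) := by
  have hwf : WellFounded ((· > ·) : Ideal (MvPolynomial (Fin n) ℂ) → _ → Prop) :=
    IsWellFounded.wf
  refine Subrelation.wf (r := InvImage (· > ·) vIdeal) ?_ (InvImage.wf vIdeal hwf)
  rintro A B ⟨hA, _, hAB⟩
  exact vIdeal_lt_of_ssubset hA hAB

lemma isVariety_algebraic {V : Set (Fin n → ℂ)} (h : IsVariety V) : IsAlgebraicSet V := h.1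

/-- A set admitting a decomposition into irreducible components. -/
def HasDecomp (A : Set (Fin n → ℂ)) : Prop :=
  ∃ (m : ℕ) (V : Fin m → Set (Fin n → ℂ)),
    (∀ i, IsVariety (V i)) ∧ (∀ i j, i ≠ j → ¬ V i ⊆ V j) ∧ A = ⋃ i, V i

lemma prune {ι : Type} [Fintype ι] (V : ι → Set (Fin n → ℂ)) (hv : ∀ i, IsVariety (V i)) :
    HasDecomp (⋃ i, V i) := by
  classical
  set 𝒮 : Finset (Set (Fin n → ℂ)) := Finset.image V Finset.univ with h𝒮
  set M : Finset (Set (Fin n → ℂ)) := 𝒮.filter (fun W => ∀ W' ∈ 𝒮, W ⊆ W' → W = W') with hM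
  have hmemS : ∀ W ∈ 𝒮, ∃ i, V i = W := by
    intro W hW
    simp only [h𝒮, Finset.mem_image, Finset.mem_univ, true_and] at hW
    exact hW
  have hcover : ∀ i, ∃ W ∈ M, V i ⊆ W := by
    intro i
    have hne : (𝒮.filter (fun W => V i ⊆ W)).Nonempty :=
      ⟨V i, by simp [h𝒮, Finset.mem_filter, Finset.mem_image]⟩
    obtain ⟨W, hWM⟩ := Finset.exists_maximal hne
    have hW := hWM.prop
    have hWmax : ∀ x ∈ 𝒮.filter (fun W => V i ⊆ W), ¬ W < x := fun x hx hlt => hWM.not_gt hx hlt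
    rw [Finset.mem_filter] at hW
    refine ⟨W, ?_, hW.2⟩
    rw [hM, Finset.mem_filter]
    refine ⟨hW.1, fun W' hW' hsub => ?_⟩
    have hW't : W' ∈ 𝒮.filter (fun W => V i ⊆ W) :=
      Finset.mem_filter.mpr ⟨hW', hW.2.trans hsub⟩
    have := hWmax W' hW't
    exact le_antisymm hsub (by by_contra hc; exact this (lt_of_le_not_ge hsub hc))
  set e := M.equivFin with he
  refine ⟨M.card, fun k => (e.symm k : Set (Fin n → ℂ)), ?_, ?_, ?_⟩
  · intro k
    have hmem : ((e.symm k : M) : Set (Fin n → ℂ)) ∈ M := (e.symm k).2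
    obtain ⟨i, hi⟩ := hmemS _ (Finset.mem_of_mem_filter _ hmem)
    show IsVariety ((e.symm k : M) : Set (Fin n → ℂ))
    rw [← hi]
    exact hv i
  · intro k l hkl hsub
    have hne : ((e.symm k : M) : Set (Fin n → ℂ)) ≠ ((e.symm l : M) : Set (Fin n → ℂ)) := by
      intro hcontra
      exact hkl (e.symm.injective (Subtype.ext hcontra))
    have hmem : ((e.symm k : M) : Set (Fin n → ℂ)) ∈ M := (e.symm k).2
    have hmem' := Finset.mem_filter.mp hmem
    exact hne (hmem'.2 _ (Finset.mem_of_mem_filter _ (e.symm l).2) hsub)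
  · ext z
    simp only [Set.mem_iUnion]
    constructor
    · rintro ⟨i, hi⟩
      obtain ⟨W, hWM, hsub⟩ := hcover i
      exact ⟨e ⟨W, hWM⟩, by simpa using hsub hi⟩
    · rintro ⟨k, hk⟩
      have hmem : ((e.symm k : M) : Set (Fin n → ℂ)) ∈ M := (e.symm k).2
      obtain ⟨i, hi⟩ := hmemS _ (Finset.mem_of_mem_filter _ hmem)
      exact ⟨i, by rw [hi]; exact hk⟩

lemma exists_decomp : ∀ A : Set (Fin n → ℂ), IsAlgebraicSet A → HasDecomp A := by
  intro A
  refine (algLT_wf (n := n)).induction (C := fun A => IsAlgebraicSet A → HasDecomp A) A ?_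
  intro A ih hA
  by_cases hvar : IsVariety A
  · refine ⟨1, fun _ => A, fun _ => hvar, fun i j hij => absurd (Subsingleton.elim i j) hij, ?_⟩
    exact (Set.iUnion_const A).symm
  · have hdec : ∃ (m : ℕ) (B : Fin m → Set (Fin n → ℂ)),
        (∀ i, IsAlgebraicSet (B i) ∧ B i ⊂ A) ∧ A = ⋃ i, B i := by
      by_contra h
      exact hvar ⟨hA, h⟩
    obtain ⟨m, B, hB, rfl⟩ := hdec
    have hd : ∀ i, HasDecomp (B i) :=
      fun i => ih (B i) ⟨(hB i).1, hA, (hB i).2⟩ (hB i).1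
    choose t W hWvar _ hWeq using hd
    have key : (⋃ i, B i) = ⋃ s : Σ i : Fin m, Fin (t i), W s.1 s.2 := by
      ext z
      simp only [Set.mem_iUnion, Sigma.exists]
      constructor
      · rintro ⟨i, hi⟩
        rw [hWeq i] at hi
        obtain ⟨j, hj⟩ := Set.mem_iUnion.mp hi
        exact ⟨i, j, hj⟩
      · rintro ⟨i, j, hj⟩
        exact ⟨i, (hWeq i) ▸ Set.mem_iUnion.mpr ⟨j, hj⟩⟩
    rw [key]
    exact prune _ fun s => hWvar s.1 s.2

lemma variety_subset {m : ℕ} {C : Set (Fin n → ℂ)} (hC : IsVariety C)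
    (D : Fin m → Set (Fin n → ℂ)) (hD : ∀ i, IsAlgebraicSet (D i)) (h : C ⊆ ⋃ i, D i) :
    ∃ i, C ⊆ D i := by
  by_contra hc
  push_neg at hc
  refine hC.2 ⟨m, fun i => C ∩ D i, fun i => ⟨algebraic_inter hC.1 (hD i), ?_, ?_⟩, ?_⟩
  · exact Set.inter_subset_left
  · intro hsub
    exact hc i fun x hx => (hsub hx).2
  · ext z
    simp only [Set.mem_iUnion, Set.mem_inter_iff]
    constructor
    · intro hz
      obtain ⟨i, hi⟩ := Set.mem_iUnion.mp (h hz)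
      exact ⟨i, hz, hi⟩
    · rintro ⟨i, hz, _⟩
      exact hz

lemma holOn_mono {A B : Set (Fin n → ℂ)} {f : (Fin n → ℂ) → ℂ} (h : A ⊆ B)
    (hf : HolOn B f) : HolOn A f := by
  intro x hx
  obtain ⟨U, hU, hxU, g, hg, heq⟩ := hf x (h hx)
  exact ⟨U, hU, hxU, g, hg, fun y hy => heq ⟨hy.1, h hy.2⟩⟩

end Aux

/-- A finite union of toral algebraic sets is a toral algebraic set, and
a finite union of atoral algebraic sets is an atoral algebraic set. -/
theorem statement3 {n : ℕ} (m : ℕ) (A : Fin m → Set (Fin n → ℂ)) :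
    ((∀ i, IsToral (A i)) → IsToral (⋃ i, A i)) ∧
    ((∀ i, IsAtoral (A i)) → IsAtoral (⋃ i, A i)) := by
  constructor
  · intro hT
    refine ⟨algebraic_iUnion A fun i => (hT i).1, ?_⟩
    intro f hf h0 z hz
    obtain ⟨i, hzi⟩ := Set.mem_iUnion.mp hz
    refine (hT i).2 f (holOn_mono (Set.subset_iUnion A i) hf) ?_ z hzi
    intro w hw
    exact h0 w ⟨hw.1, Set.mem_iUnion.mpr ⟨i, hw.2⟩⟩
  · intro hAt
    refine ⟨algebraic_iUnion A fun i => (hAt i).1, ?_⟩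
    intro C hC
    obtain ⟨m', V, hVvar, hVnc, hUnion, i₀, rfl⟩ := hC
    have hCvar : IsVariety (V i₀) := hVvar i₀
    have hCsub : V i₀ ⊆ ⋃ i, A i := hUnion ▸ Set.subset_iUnion V i₀
    -- Step A: C is contained in some A j
    obtain ⟨j, hj⟩ := variety_subset hCvar A (fun i => (hAt i).1) hCsub
    -- Step B: decompose A j into components
    obtain ⟨t, W, hWvar, hWnc, hWeq⟩ := exists_decomp (A j) (hAt j).1
    obtain ⟨k, hk⟩ := variety_subset hCvar W (fun k => (hWvar k).1) (hWeq ▸ hj)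
    -- Step C: W k is contained in some V l, forcing l = i₀ and C = W k
    have hWAj : W k ⊆ A j := by
      rw [hWeq]
      exact Set.subset_iUnion W k
    have hWk : W k ⊆ ⋃ l, V l := by
      rw [← hUnion]
      exact fun x hx => Set.mem_iUnion.mpr ⟨j, hWAj hx⟩
    obtain ⟨l, hl⟩ := variety_subset (hWvar k) V (fun l => (hVvar l).1) hWk
    have hli : l = i₀ := by
      by_contra hne
      exact hVnc i₀ l (fun h => hne h.symm) (hk.trans hl)
    have hCW : V i₀ = W k := le_antisymm hk (hli ▸ hl)
    exact (hAt j).2 (V i₀) ⟨t, W, hWvar, hWnc, hWeq, k, hCW⟩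
end
end

section
/- Let A be an infinite algebraic set in ℂ², and write A = F ∪ Z_p where F is the set of isolated points of A and p ∈ ℂ[z_1,z_2]. Then A is toral if and only if p is toral and F ⊆ 𝕋². -/
open MvPolynomial

noncomputable section

open Polynomial Metric
open scoped nonZeroDivisors

abbrev Rx := Polynomial ℂ



def e2 : MvPolynomial (Fin 2) ℂ ≃+* Polynomial (Polynomial ℂ) :=
  (MvPolynomial.finSuccEquiv ℂ 1).toRingEquiv.trans
    (Polynomial.mapEquiv ((MvPolynomial.finSuccEquiv ℂ 0).toRingEquiv.trans
      (Polynomial.mapEquiv (MvPolynomial.isEmptyRingEquiv ℂ (Fin 0)))))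

def EvH (z : Fin 2 → ℂ) : Polynomial (Polynomial ℂ) →+* ℂ :=
  (Polynomial.evalRingHom (z 0)).comp (Polynomial.mapRingHom (Polynomial.evalRingHom (z 1)))

theorem EvH_apply (z : Fin 2 → ℂ) (P : Polynomial Rx) :
    EvH z P = (P.map (Polynomial.evalRingHom (z 1))).eval (z 0) := rfl

theorem EvH_vec (w t : ℂ) (P : Polynomial Rx) :
    EvH ![w, t] P = (P.map (Polynomial.evalRingHom t)).eval w := rfl

theorem EvH_e2 (z : Fin 2 → ℂ) (u : MvPolynomial (Fin 2) ℂ) :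
    EvH z (e2 u) = MvPolynomial.eval z u := by
  have : (EvH z).comp (e2 : MvPolynomial (Fin 2) ℂ →+* Polynomial (Polynomial ℂ))
      = (MvPolynomial.eval z : MvPolynomial (Fin 2) ℂ →+* ℂ) := by
    apply MvPolynomial.ringHom_ext
    · intro a
      simp [EvH, e2, MvPolynomial.finSuccEquiv_apply, MvPolynomial.isEmptyRingEquiv_apply]
      exact (MvPolynomial.coeff_C _ _).trans (if_pos rfl)
    · intro i
      refine Fin.cases ?_ (fun j => ?_) i
      · simp [EvH, e2, MvPolynomial.finSuccEquiv_X_zero]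
      · have hj : j = 0 := Subsingleton.elim _ _
        subst hj
        have h1 : (MvPolynomial.X (Fin.succ 0) : MvPolynomial (Fin 2) ℂ) = MvPolynomial.X 1 := rfl
        simp [EvH, e2, ← h1, MvPolynomial.finSuccEquiv_X_succ, MvPolynomial.finSuccEquiv_X_zero]
  exact DFunLike.congr_fun this u

theorem continuous_EvH (D : Polynomial Rx) :
    Continuous fun z : Fin 2 → ℂ => EvH z D := by
  have h : ∀ z : Fin 2 → ℂ, EvH z D = MvPolynomial.eval z (e2.symm D) := by
    intro z
    rw [← EvH_e2 z (e2.symm D), RingEquiv.apply_symm_apply]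
  simp only [h]
  exact MvPolynomial.continuous_eval (e2.symm D)

theorem dist_vec_le {w t : ℂ} (v : Fin 2 → ℂ) {r : ℝ} (h0 : dist w (v 0) ≤ r)
    (h1 : dist t (v 1) ≤ r) (hr : 0 ≤ r) : dist (![w, t] : Fin 2 → ℂ) v ≤ r := by
  rw [dist_pi_le_iff hr]
  intro i
  refine Fin.cases ?_ (fun j => ?_) i
  · exact h0
  · have hj : j = 0 := Subsingleton.elim _ _
    subst hj
    exact h1

/-- Zero sets of polynomials in `ℂ²` have no isolated points. -/
theorem zs_not_isolated (D : Polynomial Rx) (v : Fin 2 → ℂ) (hv : EvH v D = 0)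
    {U : Set (Fin 2 → ℂ)} (hU : IsOpen U) (hvU : v ∈ U) :
    ∃ z, z ∈ U ∧ EvH z D = 0 ∧ z ≠ v := by
  obtain ⟨ε, hε, hball⟩ := Metric.isOpen_iff.mp hU v hvU
  set a := v 1 with ha
  set b := v 0 with hb
  set sa : Polynomial ℂ := D.map (Polynomial.evalRingHom a) with hsa
  have hvab : sa.eval b = 0 := hv
  rcases eq_or_ne sa 0 with hsa0 | hsa0
  · -- the whole line `t = a` is in the zero set
    refine ⟨![b + Complex.ofReal (ε/2), a], ?_, ?_, ?_⟩
    · apply hball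
      rw [Metric.mem_ball]
      have hd : dist (![b + Complex.ofReal (ε/2), a] : Fin 2 → ℂ) v ≤ ε/2 := by
        refine dist_vec_le v ?_ ?_ (le_of_lt (half_pos hε))
        · rw [← hb]
          have : dist (b + Complex.ofReal (ε/2)) b = ε/2 := by
            simp [dist_eq_norm, abs_of_pos hε]
          rw [this]
        · rw [← ha]; simp; positivity
      exact lt_of_le_of_lt hd (half_lt_self hε)
    · rw [EvH_vec, ← hsa, hsa0]; simp
    · intro hcontr
      have h0 : (![b + Complex.ofReal (ε/2), a] : Fin 2 → ℂ) 0 = v 0 := by rw [hcontr]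
      simp [← hb] at h0
      exact absurd h0 (ne_of_gt hε)
  · -- `b` is an isolated root of `sa`; use the minimum modulus principle
    have hroots : {x : ℂ | sa.IsRoot x}.Finite := Polynomial.finite_setOf_isRoot hsa0
    have hS' : ({x : ℂ | sa.IsRoot x} \ {b}).Finite := hroots.diff
    have hbnot : b ∈ ({x : ℂ | sa.IsRoot x} \ {b})ᶜ := by simp
    obtain ⟨ρ, hρ, hρball⟩ := Metric.isOpen_iff.mp hS'.isClosed.isOpen_compl b hbnot
    set r : ℝ := min (ε/2) (ρ/2) with hr
    have hr0 : 0 < r := lt_min (half_pos hε) (half_pos hρ)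
    have hrε : r ≤ ε/2 := min_le_left _ _
    have hrρ : r < ρ := lt_of_le_of_lt (min_le_right _ _) (half_lt_self hρ)
    -- minimum of ‖sa‖ on the circle of radius r
    have hsph : (Metric.sphere b r).Nonempty := NormedSpace.sphere_nonempty.mpr (le_of_lt hr0)
    obtain ⟨w₀, hw₀mem, hw₀min⟩ := (isCompact_sphere b r).exists_isMinOn hsph
      ((continuous_norm.comp (Polynomial.continuous sa)).continuousOn)
    set m : ℝ := ‖sa.eval w₀‖ with hm
    have hm0 : 0 < m := by
      rw [hm, norm_pos_iff]
      intro hcontr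
      have : w₀ ∈ {x : ℂ | sa.IsRoot x} \ {b} := by
        constructor
        · exact hcontr
        · simp only [Set.mem_singleton_iff]
          intro hwb
          rw [hwb, mem_sphere_iff_norm] at hw₀mem
          simp at hw₀mem
          rw [← hw₀mem] at hr0
          exact lt_irrefl 0 hr0
      have hmem : w₀ ∈ Metric.ball b ρ := by
        rw [mem_ball_iff_norm]
        rw [mem_sphere_iff_norm] at hw₀mem
        rw [hw₀mem]
        exact hrρ
      exact (hρball hmem) this
    -- the two-variable function
    set G : ℂ × ℂ → ℂ := fun q => EvH ![q.2, q.1] D with hGdef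
    have hGcont : Continuous G := by
      apply (continuous_EvH D).comp
      refine continuous_pi fun i => ?_
      refine Fin.cases ?_ (fun j => ?_) i
      · exact continuous_snd
      · have hj : j = 0 := Subsingleton.elim _ _
        subst hj
        exact continuous_fst
    have hGa : ∀ w, G (a, w) = sa.eval w := fun w => rfl
    have hGb : G (a, b) = 0 := hvab
    -- tube lemma
    set O : Set (ℂ × ℂ) := {q | m/2 < ‖G q‖} with hO
    have hOopen : IsOpen O := isOpen_lt continuous_const (hGcont.norm)
    have hsubO : ({a} : Set ℂ) ×ˢ (Metric.sphere b r) ⊆ O := by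
      rintro ⟨t, w⟩ ⟨ht, hw⟩
      simp only [Set.mem_singleton_iff] at ht
      subst ht
      have := hw₀min hw
      simp only [Set.mem_setOf_eq, hO]
      rw [hGa]
      calc m/2 < m := half_lt_self hm0
        _ ≤ ‖sa.eval w‖ := this
    obtain ⟨u', v', hu'open, _, hau', hsv', huv'⟩ :=
      generalized_tube_lemma isCompact_singleton (isCompact_sphere b r) hOopen hsubO
    -- choose t close to a, t ≠ a
    have haW : a ∈ u' ∩ (Metric.ball a (ε/2) ∩ {t : ℂ | ‖G (t, b)‖ < m/2}) := by
      refine ⟨hau' rfl, Metric.mem_ball_self (half_pos hε), ?_⟩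
      simp only [Set.mem_setOf_eq, hGb]
      rw [norm_zero]
      exact half_pos hm0
    have hWopen : IsOpen (u' ∩ (Metric.ball a (ε/2) ∩ {t : ℂ | ‖G (t, b)‖ < m/2})) := by
      refine hu'open.inter (Metric.isOpen_ball.inter ?_)
      exact isOpen_lt (hGcont.comp (by continuity)).norm continuous_const
    obtain ⟨η, hη, hηball⟩ := Metric.isOpen_iff.mp hWopen a haW
    set t : ℂ := a + Complex.ofReal (η/2) with hT
    have htW : t ∈ u' ∩ (Metric.ball a (ε/2) ∩ {t : ℂ | ‖G (t, b)‖ < m/2}) := by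
      apply hηball
      rw [Metric.mem_ball, hT]
      have : dist (a + Complex.ofReal (η/2)) a = η/2 := by
        simp [dist_eq_norm, abs_of_pos hη]
      rw [this]
      exact half_lt_self hη
    have hta : t ≠ a := by
      rw [hT]
      intro hcontr
      have h2 : Complex.ofReal (η/2) = 0 := by
        have := congrArg (fun x => x - a) hcontr
        simpa using this
      rw [Complex.ofReal_eq_zero] at h2
      linarith [half_pos hη]
    obtain ⟨htu', htball, htGb⟩ := htW
    -- there must be a zero of G (t, ·) in the closed ball
    by_contra hno
    push_neg at hno
    have hnozero : ∀ w ∈ Metric.closedBall b r, G (t, w) ≠ 0 := by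
      intro w hw hGtw
      have hmem : ![w, t] ∈ U := by
        apply hball
        rw [Metric.mem_ball]
        have hd : dist (![w, t] : Fin 2 → ℂ) v ≤ ε/2 := by
          refine dist_vec_le v ?_ ?_ (le_of_lt (half_pos hε))
          · rw [← hb]
            exact le_trans (Metric.mem_closedBall.mp hw) hrε
          · rw [← ha]
            exact le_of_lt (Metric.mem_ball.mp htball)
        exact lt_of_le_of_lt hd (half_lt_self hε)
      have heq := hno ![w, t] hmem hGtw
      have h1 : (![w, t] : Fin 2 → ℂ) 1 = v 1 := by rw [heq]
      simp [← ha] at h1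
      exact hta h1
    -- apply the maximum principle to 1 / G (t, ·)
    set Pt : Polynomial ℂ := D.map (Polynomial.evalRingHom t) with hPt
    have hGt : ∀ w, G (t, w) = Pt.eval w := fun w => rfl
    have hdiff : DiffContOnCl ℂ (fun w => (Pt.eval w)⁻¹) (Metric.ball b r) := by
      constructor
      · apply DifferentiableOn.inv
        · exact (Polynomial.differentiable Pt).differentiableOn
        · intro w hw
          rw [← hGt]
          exact hnozero w (Metric.ball_subset_closedBall hw)
      · rw [closure_ball b (ne_of_gt hr0)]
        apply ContinuousOn.inv₀
        · exact (Polynomial.continuous Pt).continuousOn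
        · intro w hw
          rw [← hGt]
          exact hnozero w hw
    have hfrontier : ∀ w ∈ frontier (Metric.ball b r), ‖(Pt.eval w)⁻¹‖ ≤ (m/2)⁻¹ := by
      intro w hw
      rw [frontier_ball b (ne_of_gt hr0)] at hw
      have : (t, w) ∈ O := huv' ⟨htu', hsv' hw⟩
      simp only [hO, Set.mem_setOf_eq, hGt] at this
      rw [norm_inv]
      exact inv_anti₀ (half_pos hm0) (le_of_lt this)
    have hble : ‖(Pt.eval b)⁻¹‖ ≤ (m/2)⁻¹ :=
      Complex.norm_le_of_forall_mem_frontier_norm_le Metric.isBounded_ball hdiff hfrontier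
        (subset_closure (Metric.mem_ball_self hr0))
    have hbne : Pt.eval b ≠ 0 := by
      rw [← hGt]
      exact hnozero b (Metric.mem_closedBall_self (le_of_lt hr0))
    have h1 : (m/2)⁻¹ < ‖Pt.eval b‖⁻¹ := by
      apply inv_strictAnti₀
      · rw [norm_pos_iff]; exact hbne
      · rw [← hGt] at *; exact htGb
    rw [norm_inv] at hble
    linarith


abbrev Kx := FractionRing Rx

theorem map_primPart_assoc {d : Polynomial Kx} (hd : d ≠ 0) :
    Associated ((IsLocalization.integerNormalization Rx⁰ d).primPart.map (algebraMap Rx Kx)) d := by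
  obtain ⟨⟨c, hc⟩, hcd⟩ := IsLocalization.integerNormalization_map_to_map Rx⁰ d
  set N := IsLocalization.integerNormalization Rx⁰ d with hN
  have hN0 : N ≠ 0 := by
    rw [hN, Ne, IsFractionRing.integerNormalization_eq_zero_iff]; exact hd
  have hcd' : N.map (algebraMap Rx Kx) = Polynomial.C (algebraMap Rx Kx c) * d := by
    rw [hcd, Algebra.smul_def, Polynomial.algebraMap_apply]
  have hcontent : N = Polynomial.C N.content * N.primPart := N.eq_C_content_mul_primPart
  have hmapN : Polynomial.C (algebraMap Rx Kx N.content) *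
      (N.primPart.map (algebraMap Rx Kx)) = Polynomial.C (algebraMap Rx Kx c) * d := by
    rw [← hcd', ← Polynomial.map_C, ← Polynomial.map_mul, ← hcontent]
  have hinj : Function.Injective (algebraMap Rx Kx) := IsFractionRing.injective _ _
  have hu1 : IsUnit (Polynomial.C (algebraMap Rx Kx N.content)) := by
    refine Polynomial.isUnit_C.mpr (isUnit_iff_ne_zero.mpr ?_)
    simp only [Ne, map_eq_zero_iff _ hinj, Polynomial.content_eq_zero_iff]
    exact hN0
  have hu2 : IsUnit (Polynomial.C (algebraMap Rx Kx c)) := by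
    refine Polynomial.isUnit_C.mpr (isUnit_iff_ne_zero.mpr ?_)
    simp only [Ne, map_eq_zero_iff _ hinj]
    exact nonZeroDivisors.ne_zero hc
  have a1 : Associated (N.primPart.map (algebraMap Rx Kx))
      (Polynomial.C (algebraMap Rx Kx N.content) * (N.primPart.map (algebraMap Rx Kx))) :=
    (associated_unit_mul_left _ _ hu1).symm
  rw [hmapN] at a1
  exact a1.trans (associated_unit_mul_left _ _ hu2)

set_option synthInstance.maxHeartbeats 800000 in
theorem relprime_isCoprime {P Q : Polynomial Rx} (hP : P ≠ 0) (hQ : Q ≠ 0)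
    (h : ∀ d, d ∣ P → d ∣ Q → IsUnit d) :
    IsCoprime (P.map (algebraMap Rx Kx)) (Q.map (algebraMap Rx Kx)) := by
  have hinj : Function.Injective (algebraMap Rx Kx) := IsFractionRing.injective _ _
  haveI : IsPrincipalIdealRing (Polynomial Kx) := EuclideanDomain.to_principal_ideal_domain (R := Polynomial Kx)
  haveI : Submodule.IsPrincipal
      (Ideal.span {P.map (algebraMap Rx Kx), Q.map (algebraMap Rx Kx)}) :=
    IsPrincipalIdealRing.principal _
  apply IsRelPrime.isCoprime
  intro d hdP hdQ
  have hd0 : d ≠ 0 := by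
    rintro rfl
    exact hP ((Polynomial.map_eq_zero_iff hinj).mp (zero_dvd_iff.mp hdP))
  set D := (IsLocalization.integerNormalization Rx⁰ d).primPart with hD
  have hassoc := map_primPart_assoc hd0
  -- D divides P
  have key : ∀ W : Polynomial Rx, W ≠ 0 → d ∣ W.map (algebraMap Rx Kx) → D ∣ W := by
    intro W hW0 hdW
    have h1 : (D.map (algebraMap Rx Kx)) ∣ W.primPart.map (algebraMap Rx Kx) := by
      have hWc : IsUnit (Polynomial.C (algebraMap Rx Kx W.content)) := by
        refine Polynomial.isUnit_C.mpr (isUnit_iff_ne_zero.mpr ?_)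
        simp only [Ne, map_eq_zero_iff _ hinj, Polynomial.content_eq_zero_iff]
        exact hW0
      have : W.map (algebraMap Rx Kx) =
          Polynomial.C (algebraMap Rx Kx W.content) * W.primPart.map (algebraMap Rx Kx) := by
        rw [← Polynomial.map_C, ← Polynomial.map_mul, ← W.eq_C_content_mul_primPart]
      refine hassoc.dvd.trans ?_
      rw [this] at hdW
      exact (hWc.dvd_mul_left).mp hdW
    have h2 : D ∣ W.primPart :=
      (Polynomial.isPrimitive_primPart _).dvd_of_fraction_map_dvd_fraction_map
        h1
    exact h2.trans (W.primPart_dvd)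
  have hDP : D ∣ P := key P hP hdP
  have hDQ : D ∣ Q := key Q hQ hdQ
  have hDu : IsUnit D := h D hDP hDQ
  exact Polynomial.isUnit_or_eq_zero_of_isUnit_integerNormalization_primPart hd0 hDu

theorem relprime_bezout {P Q : Polynomial Rx} (hP : P ≠ 0) (hQ : Q ≠ 0)
    (h : ∀ d, d ∣ P → d ∣ Q → IsUnit d) :
    ∃ (A B : Polynomial Rx) (c : Rx), c ≠ 0 ∧ A * P + B * Q = Polynomial.C c := by
  have hinj : Function.Injective (algebraMap Rx Kx) := IsFractionRing.injective _ _
  obtain ⟨a, b, hab⟩ := relprime_isCoprime hP hQ h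
  obtain ⟨⟨c₁, hc₁⟩, h1⟩ := IsLocalization.integerNormalization_map_to_map Rx⁰ a
  obtain ⟨⟨c₂, hc₂⟩, h2⟩ := IsLocalization.integerNormalization_map_to_map Rx⁰ b
  refine ⟨IsLocalization.integerNormalization Rx⁰ a * Polynomial.C c₂,
    IsLocalization.integerNormalization Rx⁰ b * Polynomial.C c₁, c₁ * c₂,
    mul_ne_zero (nonZeroDivisors.ne_zero hc₁) (nonZeroDivisors.ne_zero hc₂), ?_⟩
  apply Polynomial.map_injective (algebraMap Rx Kx) hinj
  have e1 : (IsLocalization.integerNormalization Rx⁰ a).map (algebraMap Rx Kx)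
      = Polynomial.C (algebraMap Rx Kx c₁) * a := by
    rw [h1, Algebra.smul_def, Polynomial.algebraMap_apply]
  have e2 : (IsLocalization.integerNormalization Rx⁰ b).map (algebraMap Rx Kx)
      = Polynomial.C (algebraMap Rx Kx c₂) * b := by
    rw [h2, Algebra.smul_def, Polynomial.algebraMap_apply]
  rw [Polynomial.map_add, Polynomial.map_mul, Polynomial.map_mul, Polynomial.map_mul,
    Polynomial.map_mul, e1, e2, Polynomial.map_C, Polynomial.map_C, Polynomial.map_C, map_mul]
  have : Polynomial.C ((algebraMap Rx Kx) c₁) * a * Polynomial.C ((algebraMap Rx Kx) c₂)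
        * P.map (algebraMap Rx Kx)
      + Polynomial.C ((algebraMap Rx Kx) c₂) * b * Polynomial.C ((algebraMap Rx Kx) c₁)
        * Q.map (algebraMap Rx Kx)
      = Polynomial.C ((algebraMap Rx Kx) c₁) * Polynomial.C ((algebraMap Rx Kx) c₂)
        * (a * P.map (algebraMap Rx Kx) + b * Q.map (algebraMap Rx Kx)) := by ring
  rw [this, hab, mul_one, Polynomial.C_mul]

theorem finite_common_zeros {P Q : Polynomial Rx} (h : ∀ d, d ∣ P → d ∣ Q → IsUnit d) :
    {z : Fin 2 → ℂ | EvH z P = 0 ∧ EvH z Q = 0}.Finite := by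
  have unit_case : ∀ (W : Polynomial Rx), IsUnit W →
      {z : Fin 2 → ℂ | EvH z W = 0}.Finite := by
    intro W hW
    have : {z : Fin 2 → ℂ | EvH z W = 0} = ∅ := by
      ext z; simp only [Set.mem_setOf_eq, Set.mem_empty_iff_false, iff_false]
      exact (hW.map (EvH z)).ne_zero
    rw [this]; exact Set.finite_empty
  rcases eq_or_ne P 0 with rfl | hP
  · have hQu : IsUnit Q := h Q (dvd_zero Q) dvd_rfl
    exact ((unit_case Q hQu).subset (fun z hz => hz.2))
  rcases eq_or_ne Q 0 with rfl | hQ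
  · have hPu : IsUnit P := h P dvd_rfl (dvd_zero P)
    exact ((unit_case P hPu).subset (fun z hz => hz.1))
  obtain ⟨A, B, c, hc0, hbez⟩ := relprime_bezout hP hQ h
  have hroot1 : ∀ z ∈ {z : Fin 2 → ℂ | EvH z P = 0 ∧ EvH z Q = 0}, c.IsRoot (z 1) := by
    rintro z ⟨h1, h2⟩
    have := congrArg (EvH z) hbez
    simp only [map_add, map_mul, h1, h2, mul_zero, zero_add, add_zero] at this
    have hC : EvH z (Polynomial.C c) = c.eval (z 1) := by
      rw [EvH_apply, Polynomial.map_C, Polynomial.eval_C]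
      simp
    rw [hC] at this
    exact this.symm
  have hsub : {z : Fin 2 → ℂ | EvH z P = 0 ∧ EvH z Q = 0} ⊆
      ⋃ t ∈ {t : ℂ | c.IsRoot t},
        {z : Fin 2 → ℂ | z 1 = t ∧ EvH z P = 0 ∧ EvH z Q = 0} := by
    intro z hz
    exact Set.mem_biUnion (hroot1 z hz) ⟨rfl, hz⟩
  refine Set.Finite.subset (Set.Finite.biUnion (Polynomial.finite_setOf_isRoot hc0) ?_) hsub
  intro t _
  set Pt := P.map (Polynomial.evalRingHom t) with hPt
  set Qt := Q.map (Polynomial.evalRingHom t) with hQt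
  have fin_of : ∀ (W : Polynomial Rx), W.map (Polynomial.evalRingHom t) ≠ 0 →
      {z : Fin 2 → ℂ | z 1 = t ∧ EvH z P = 0 ∧ EvH z Q = 0}.Finite →
        True := fun _ _ _ => trivial
  -- main case analysis
  rcases eq_or_ne Pt 0 with hPt0 | hPt0
  · rcases eq_or_ne Qt 0 with hQt0 | hQt0
    · -- both vanish: common factor C (X - C t), contradiction
      exfalso
      have hdP : Polynomial.C (Polynomial.X - Polynomial.C t) ∣ P := by
        rw [Polynomial.C_dvd_iff_dvd_coeff]
        intro i
        rw [Polynomial.dvd_iff_isRoot]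
        have : Pt.coeff i = 0 := by rw [hPt0]; simp
        rwa [hPt, Polynomial.coeff_map, Polynomial.coe_evalRingHom] at this
      have hdQ : Polynomial.C (Polynomial.X - Polynomial.C t) ∣ Q := by
        rw [Polynomial.C_dvd_iff_dvd_coeff]
        intro i
        rw [Polynomial.dvd_iff_isRoot]
        have : Qt.coeff i = 0 := by rw [hQt0]; simp
        rwa [hQt, Polynomial.coeff_map, Polynomial.coe_evalRingHom] at this
      have := h _ hdP hdQ
      rw [Polynomial.isUnit_C] at this
      exact Polynomial.not_isUnit_X_sub_C t this
    · -- Qt ≠ 0 : z 0 ranges over roots of Qt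
      refine Set.Finite.of_finite_image (f := fun z => z 0) ?_ ?_
      · refine (Polynomial.finite_setOf_isRoot hQt0).subset ?_
        rintro x ⟨z, ⟨hz1, _, hz2⟩, rfl⟩
        rw [EvH_apply, hz1] at hz2
        exact hz2
      · rintro z ⟨hz1, -, -⟩ w ⟨hw1, -, -⟩ hzw
        funext i
        refine Fin.cases ?_ (fun j => ?_) i
        · exact hzw
        · have hj : j = 0 := Subsingleton.elim _ _
          subst hj
          rw [show (Fin.succ 0 : Fin 2) = 1 from rfl, hz1, hw1]
  · refine Set.Finite.of_finite_image (f := fun z => z 0) ?_ ?_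
    · refine (Polynomial.finite_setOf_isRoot hPt0).subset ?_
      rintro x ⟨z, ⟨hz1, hz2, _⟩, rfl⟩
      rw [EvH_apply, hz1] at hz2
      exact hz2
    · rintro z ⟨hz1, -, -⟩ w ⟨hw1, -, -⟩ hzw
      funext i
      refine Fin.cases ?_ (fun j => ?_) i
      · exact hzw
      · have hj : j = 0 := Subsingleton.elim _ _
        subst hj
        rw [show (Fin.succ 0 : Fin 2) = 1 from rfl, hz1, hw1]

def ZS (P : Polynomial Rx) : Set (Fin 2 → ℂ) := {z | EvH z P = 0}

theorem ZS_mul (P Q : Polynomial Rx) : ZS (P * Q) = ZS P ∪ ZS Q := by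
  ext z
  simp [ZS, map_mul, mul_eq_zero]

theorem exists_curve_part (P : Polynomial Rx) : ∀ Q : Polynomial Rx,
    ∃ D : Polynomial Rx, ZS D ⊆ ZS P ∩ ZS Q ∧ ((ZS P ∩ ZS Q) \ ZS D).Finite := by
  refine WellFounded.induction (C := fun P => ∀ Q : Polynomial Rx,
    ∃ D : Polynomial Rx, ZS D ⊆ ZS P ∩ ZS Q ∧ ((ZS P ∩ ZS Q) \ ZS D).Finite)
    wellFounded_dvdNotUnit P ?_
  clear P
  intro P IH Q
  rcases eq_or_ne P 0 with rfl | hP0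
  · have hz : ZS (0 : Polynomial Rx) = Set.univ := by
      ext z; simp [ZS]
    refine ⟨Q, ?_, ?_⟩ <;> simp [hz]
  rcases eq_or_ne Q 0 with rfl | hQ0
  · have hz : ZS (0 : Polynomial Rx) = Set.univ := by
      ext z; simp [ZS]
    refine ⟨P, ?_, ?_⟩ <;> simp [hz]
  by_cases hrp : ∀ d, d ∣ P → d ∣ Q → IsUnit d
  · refine ⟨1, ?_, ?_⟩
    · have : ZS (1 : Polynomial Rx) = ∅ := by
        ext z; simp [ZS]
      simp [this]
    · have : ZS (1 : Polynomial Rx) = ∅ := by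
        ext z; simp [ZS]
      rw [this, Set.diff_empty]
      exact finite_common_zeros hrp
  · push_neg at hrp
    obtain ⟨c, hcP, hcQ, hcu⟩ := hrp
    obtain ⟨P₁, rfl⟩ := hcP
    obtain ⟨Q₁, rfl⟩ := hcQ
    have hP₁0 : P₁ ≠ 0 := by rintro rfl; simp at hP0
    obtain ⟨D₁, hD₁sub, hD₁fin⟩ := IH P₁ ⟨hP₁0, c, hcu, mul_comm c P₁⟩ Q₁
    refine ⟨c * D₁, ?_, ?_⟩
    · rw [ZS_mul, ZS_mul, ZS_mul]
      rintro z (hz | hz)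
      · exact ⟨Or.inl hz, Or.inl hz⟩
      · obtain ⟨h1, h2⟩ := hD₁sub hz
        exact ⟨Or.inr h1, Or.inr h2⟩
    · rw [ZS_mul, ZS_mul, ZS_mul]
      refine hD₁fin.subset ?_
      rintro z ⟨⟨hzP, hzQ⟩, hznot⟩
      rw [Set.mem_union, not_or] at hznot
      obtain ⟨hznc, hznD₁⟩ := hznot
      rcases hzP with h | h
      · exact absurd h hznc
      rcases hzQ with h' | h'
      · exact absurd h' hznc
      exact ⟨⟨h, h'⟩, hznD₁⟩

theorem zeroSet_eq_ZS (u : MvPolynomial (Fin 2) ℂ) : zeroSet u = ZS (e2 u) := by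
  ext z
  simp only [zeroSet, ZS, Set.mem_setOf_eq, EvH_e2]

theorem algebraic_exists_curve {A : Set (Fin 2 → ℂ)} (hA : IsAlgebraicSet A) :
    ∃ G : MvPolynomial (Fin 2) ℂ, zeroSet G ⊆ A ∧ (A \ zeroSet G).Finite := by
  obtain ⟨S, rfl⟩ := hA
  have key : ∀ S : Finset (MvPolynomial (Fin 2) ℂ), ∃ D : Polynomial Rx,
      ZS D ⊆ (⋂ q ∈ S, zeroSet q) ∧ ((⋂ q ∈ S, zeroSet q) \ ZS D).Finite := by
    intro S
    induction S using Finset.induction_on with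
    | empty =>
      refine ⟨0, ?_, ?_⟩
      · intro z _; simp
      · have h0 : ZS (0 : Polynomial Rx) = Set.univ := by ext z; simp [ZS]
        simp [h0]
    | @insert q S hq IH =>
      obtain ⟨D, hDsub, hDfin⟩ := IH
      obtain ⟨D', hD'sub, hD'fin⟩ := exists_curve_part (e2 q) D
      refine ⟨D', ?_, ?_⟩
      · rw [Finset.set_biInter_insert]
        intro z hz
        obtain ⟨h1, h2⟩ := hD'sub hz
        exact ⟨by rwa [zeroSet_eq_ZS], hDsub h2⟩
      · rw [Finset.set_biInter_insert]
        refine (hD'fin.union hDfin).subset ?_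
        rintro z ⟨⟨hzq, hzS⟩, hznD'⟩
        by_cases hzD : z ∈ ZS D
        · left
          refine ⟨⟨?_, hzD⟩, hznD'⟩
          rwa [← zeroSet_eq_ZS]
        · right
          exact ⟨hzS, hzD⟩
  obtain ⟨D, h1, h2⟩ := key S
  refine ⟨e2.symm D, ?_, ?_⟩
  · rwa [zeroSet_eq_ZS, RingEquiv.apply_symm_apply]
  · rwa [zeroSet_eq_ZS, RingEquiv.apply_symm_apply]

theorem isolatedPoints_finite {A : Set (Fin 2 → ℂ)} (hA : IsAlgebraicSet A) :
    (isolatedPoints A).Finite := by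
  obtain ⟨G, hGsub, hGfin⟩ := algebraic_exists_curve hA
  refine hGfin.subset ?_
  rintro x ⟨hxA, U, hUo, hxU, hUA⟩
  refine ⟨hxA, fun hxG => ?_⟩
  rw [zeroSet_eq_ZS] at hxG hGsub
  obtain ⟨z, hzU, hz0, hzx⟩ := zs_not_isolated (e2 G) x hxG hUo hxU
  have : z ∈ U ∩ A := ⟨hzU, hGsub hz0⟩
  rw [hUA] at this
  exact hzx this

/-- Let `A ⊆ ℂ²` be an infinite algebraic set, written as `A = F ∪ Z_p`
where `F` is the set of isolated points of `A`.  Then `A` is toral iff `p` is toral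
and `F ⊆ 𝕋²`. -/
theorem statement6 (A : Set (Fin 2 → ℂ)) (hA : IsAlgebraicSet A) (hinf : A.Infinite)
    (F : Set (Fin 2 → ℂ)) (hF : F = isolatedPoints A)
    (p : MvPolynomial (Fin 2) ℂ) (hdecomp : A = F ∪ zeroSet p) :
    IsToral A ↔ IsToralPoly p ∧ F ⊆ torus 2 := by
  classical
  have hFfin : F.Finite := by rw [hF]; exact isolatedPoints_finite hA
  have hZA : zeroSet p ⊆ A := by rw [hdecomp]; exact Set.subset_union_right
  have hFA : F ⊆ A := by rw [hdecomp]; exact Set.subset_union_left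
  constructor
  · rintro ⟨hAalg, hdet⟩
    have hFT : F ⊆ torus 2 := by
      intro x hxF
      by_contra hxT
      have hxA : x ∈ A := hFA hxF
      set f : (Fin 2 → ℂ) → ℂ := fun z => if z = x then 1 else 0 with hf
      have hhol : HolOn A f := by
        intro y hyA
        by_cases hyx : y = x
        · subst hyx
          rw [hF] at hxF
          obtain ⟨-, U, hUo, hyU, hUA⟩ := hxF
          refine ⟨U, hUo, hyU, fun _ => 1, differentiableOn_const 1, ?_⟩
          intro z hz
          rw [hUA] at hz
          simp only [Set.mem_singleton_iff] at hz
          subst hz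
          simp [hf]
        · refine ⟨{x}ᶜ, isClosed_singleton.isOpen_compl, hyx, fun _ => 0,
            differentiableOn_const 0, ?_⟩
          rintro z ⟨hz1, -⟩
          simp only [Set.mem_compl_iff, Set.mem_singleton_iff] at hz1
          simp [hf, hz1]
      have hvan : ∀ z ∈ torus 2 ∩ A, f z = 0 := by
        rintro z ⟨hzT, -⟩
        have : z ≠ x := fun h => hxT (h ▸ hzT)
        simp [hf, this]
      have := hdet f hhol hvan x hxA
      simp [hf] at this
    refine ⟨⟨⟨{p}, by simp⟩, ?_⟩, hFT⟩
    intro f hf hvan z hz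
    set f' : (Fin 2 → ℂ) → ℂ := fun w => if w ∈ zeroSet p then f w else 0 with hf'
    have hhol : HolOn A f' := by
      intro x hxA
      by_cases hxF : x ∈ F
      · rw [hF] at hxF
        obtain ⟨-, U, hUo, hxU, hUA⟩ := hxF
        refine ⟨U, hUo, hxU, fun _ => f' x, differentiableOn_const _, ?_⟩
        intro w hw
        rw [hUA] at hw
        simp only [Set.mem_singleton_iff] at hw
        rw [hw]
      · have hxZ : x ∈ zeroSet p := by
          have := hxA
          rw [hdecomp] at this
          rcases this with h | h
          · exact absurd h hxF
          · exact h
        obtain ⟨U, hUo, hxU, g, hg, hgf⟩ := hf x hxZ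
        refine ⟨U ∩ (F \ zeroSet p)ᶜ,
          hUo.inter ((hFfin.subset Set.diff_subset).isClosed.isOpen_compl), ⟨hxU, ?_⟩,
          g, hg.mono Set.inter_subset_left, ?_⟩
        · simp only [Set.mem_compl_iff, Set.mem_diff, not_and, not_not]
          intro h
          exact absurd h hxF
        · rintro w ⟨⟨hwU, hwc⟩, hwA⟩
          have hwZ : w ∈ zeroSet p := by
            rw [hdecomp] at hwA
            rcases hwA with h | h
            · simp only [Set.mem_compl_iff, Set.mem_diff, not_and, not_not] at hwc
              exact hwc h
            · exact h
          have := hgf ⟨hwU, hwZ⟩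
          rw [this]
          simp only [hf', if_pos hwZ]
    have hvan' : ∀ w ∈ torus 2 ∩ A, f' w = 0 := by
      rintro w ⟨hwT, -⟩
      by_cases hwZ : w ∈ zeroSet p
      · simp only [hf', if_pos hwZ]
        exact hvan w ⟨hwT, hwZ⟩
      · simp [hf', hwZ]
    have := hdet f' hhol hvan' z (hZA hz)
    simpa only [hf', if_pos hz] using this
  · rintro ⟨⟨-, hdetp⟩, hFT⟩
    refine ⟨hA, ?_⟩
    intro f hf hvan z hz
    have hfZ : HolOn (zeroSet p) f := by
      intro x hx
      obtain ⟨U, hUo, hxU, g, hg, hgf⟩ := hf x (hZA hx)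
      exact ⟨U, hUo, hxU, g, hg, hgf.mono (Set.inter_subset_inter_right U hZA)⟩
    have hvanZ : ∀ w ∈ torus 2 ∩ zeroSet p, f w = 0 := by
      rintro w ⟨hwT, hwZ⟩
      exact hvan w ⟨hwT, hZA hwZ⟩
    have hfzero : ∀ w ∈ zeroSet p, f w = 0 := hdetp f hfZ hvanZ
    rw [hdecomp] at hz
    rcases hz with h | h
    · exact hvan z ⟨hFT h, hFA h⟩
    · exact hfzero z h
end
end

section
/- Every toral polynomial p ∈ ℂ[z_1,…,z_n] is essentially 𝕋^n-symmetric, i.e., there is a unimodular constant τ such that (τp)^~ = τp (or p = 0). -/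
open MvPolynomial

noncomputable section

section AuxLemmas

variable {n : ℕ}

private lemma mem_supp_le (p : MvPolynomial (Fin n) ℂ) {a : Fin n →₀ ℕ} (ha : a ∈ p.support)
    (i : Fin n) : a i ≤ p.degreeOf i := by
  rw [degreeOf_eq_sup]; exact Finset.le_sup (f := fun m => m i) ha

/-- exponent map of the reflection -/
private def reflExp (p : MvPolynomial (Fin n) ℂ) (a : Fin n →₀ ℕ) : Fin n →₀ ℕ :=
  Finsupp.equivFunOnFinite.symm fun i => p.degreeOf i - a i

private lemma reflExp_apply (p : MvPolynomial (Fin n) ℂ) (a : Fin n →₀ ℕ) (i : Fin n) :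
    reflExp p a i = p.degreeOf i - a i := rfl

private lemma reflExp_injOn (p : MvPolynomial (Fin n) ℂ) {a b : Fin n →₀ ℕ}
    (ha : a ∈ p.support) (hb : b ∈ p.support) (h : reflExp p a = reflExp p b) : a = b := by
  ext i
  have h1 := mem_supp_le p ha i
  have h2 := mem_supp_le p hb i
  have := congrFun (congrArg (⇑) h) i
  rw [reflExp_apply, reflExp_apply] at this
  omega

private lemma reflect_def (p : MvPolynomial (Fin n) ℂ) :
    reflectPoly p = ∑ a ∈ p.support, monomial (reflExp p a) (starRingEnd ℂ (p.coeff a)) := rfl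

private lemma coeff_reflect (p : MvPolynomial (Fin n) ℂ) {a : Fin n →₀ ℕ} (ha : a ∈ p.support) :
    coeff (reflExp p a) (reflectPoly p) = starRingEnd ℂ (p.coeff a) := by
  rw [reflect_def, coeff_sum]
  rw [Finset.sum_eq_single a]
  · simp [coeff_monomial]
  · intro b hb hne
    rw [coeff_monomial, if_neg]
    intro h
    exact hne (reflExp_injOn p hb ha h)
  · intro h; exact absurd ha h

private lemma reflect_ne_zero {p : MvPolynomial (Fin n) ℂ} (hp : p ≠ 0) : reflectPoly p ≠ 0 := by
  obtain ⟨a, ha⟩ := (support_nonempty.mpr hp)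
  intro h
  have := coeff_reflect p ha
  rw [h] at this
  simp only [coeff_zero] at this
  exact (mem_support_iff.mp ha) (by simpa using this.symm)

private lemma coeff_reflect_eq_zero (p : MvPolynomial (Fin n) ℂ) {m : Fin n →₀ ℕ} {i : Fin n}
    (hm : p.degreeOf i < m i) : coeff m (reflectPoly p) = 0 := by
  rw [reflect_def, coeff_sum]
  apply Finset.sum_eq_zero
  intro a ha
  rw [coeff_monomial, if_neg]
  intro h
  have : reflExp p a i = m i := by rw [h]
  rw [reflExp_apply] at this
  omega

private lemma degreeOf_reflect_le (p : MvPolynomial (Fin n) ℂ) (i : Fin n) :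
    (reflectPoly p).degreeOf i ≤ p.degreeOf i := by
  rw [degreeOf_le_iff]
  intro m hm
  by_contra h
  exact (mem_support_iff.mp hm) (coeff_reflect_eq_zero p (i := i) (by omega))

private lemma degreeOf_zero_mul {m : ℕ} (a b : MvPolynomial (Fin (m+1)) ℂ) (ha : a ≠ 0)
    (hb : b ≠ 0) : degreeOf 0 (a * b) = degreeOf 0 a + degreeOf 0 b := by
  have h := Polynomial.natDegree_mul (p := finSuccEquiv ℂ m a) (q := finSuccEquiv ℂ m b)
    (by simpa using ha) (by simpa using hb)
  rw [← map_mul] at h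
  rw [← natDegree_finSuccEquiv, ← natDegree_finSuccEquiv, ← natDegree_finSuccEquiv, h]

private lemma degreeOf_mul' (i : Fin n) (a b : MvPolynomial (Fin n) ℂ) (ha : a ≠ 0)
    (hb : b ≠ 0) : degreeOf i (a * b) = degreeOf i a + degreeOf i b := by
  cases n with
  | zero => exact absurd i.2 (by omega)
  | succ m =>
    set e : Fin (m+1) ≃ Fin (m+1) := Equiv.swap 0 i with he
    have key : ∀ x : MvPolynomial (Fin (m+1)) ℂ,
        degreeOf i x = degreeOf 0 (rename (⇑e) x) := by
      intro x
      have := degreeOf_rename_of_injective (p := x) (f := ⇑e) e.injective i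
      rw [he] at this ⊢
      rw [Equiv.swap_apply_right] at this
      exact this.symm
    rw [key, key, key, map_mul]
    have hi : Function.Injective ⇑(rename (⇑e) : MvPolynomial (Fin (m+1)) ℂ →ₐ[ℂ] _) :=
      rename_injective _ e.injective
    exact degreeOf_zero_mul _ _ (fun h => ha (hi (by simpa using h)))
      (fun h => hb (hi (by simpa using h)))

private lemma eval_reflect (p : MvPolynomial (Fin n) ℂ) (z : Fin n → ℂ) (hz : ∀ i, z i ≠ 0) :
    eval z (reflectPoly p) =
      (∏ i, z i ^ p.degreeOf i) *
        starRingEnd ℂ (eval (fun i => (starRingEnd ℂ (z i))⁻¹) p) := by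
  rw [reflectPoly, map_sum]
  rw [eval_eq' (fun i => (starRingEnd ℂ (z i))⁻¹) p, map_sum, Finset.mul_sum]
  apply Finset.sum_congr rfl
  intro a ha
  rw [eval_monomial]
  rw [Finsupp.prod_fintype _ _ (fun i => pow_zero (z i))]
  rw [map_mul, map_prod]
  have h1 : ∀ i : Fin n,
      (starRingEnd ℂ) (((starRingEnd ℂ) (z i))⁻¹ ^ a i) = ((z i)⁻¹) ^ a i := by
    intro i; rw [map_pow, map_inv₀, starRingEnd_self_apply]
  rw [Finset.prod_congr rfl (fun i _ => h1 i)]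
  have h2 : (∏ i, z i ^ ((Finsupp.equivFunOnFinite.symm
      fun i => p.degreeOf i - a i : Fin n →₀ ℕ) i)) =
      (∏ i, z i ^ p.degreeOf i) * ∏ i, ((z i)⁻¹) ^ a i := by
    rw [← Finset.prod_mul_distrib]
    apply Finset.prod_congr rfl
    intro i _
    rw [Finsupp.equivFunOnFinite_symm_apply_apply]
    rw [pow_sub₀ (z i) (hz i) (mem_supp_le p ha i), inv_pow]
  rw [h2]; ring

private lemma reflect_mul (a b : MvPolynomial (Fin n) ℂ) (ha : a ≠ 0) (hb : b ≠ 0) :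
    reflectPoly (a * b) = reflectPoly a * reflectPoly b := by
  have hdeg : ∀ i, degreeOf i (a * b) = degreeOf i a + degreeOf i b :=
    fun i => degreeOf_mul' i a b ha hb
  have hX : (∏ i : Fin n, (X i : MvPolynomial (Fin n) ℂ)) ≠ 0 := by
    apply Finset.prod_ne_zero_iff.mpr
    intro i _
    exact X_ne_zero i
  apply mul_right_cancel₀ hX
  apply MvPolynomial.funext
  intro z
  by_cases hz : ∀ i, z i ≠ 0
  · have hprod : (∏ i, z i ^ (a * b).degreeOf i) =
        (∏ i, z i ^ a.degreeOf i) * (∏ i, z i ^ b.degreeOf i) := by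
      rw [← Finset.prod_mul_distrib]
      exact Finset.prod_congr rfl (fun i _ => by rw [hdeg i, pow_add])
    simp only [map_mul]
    rw [eval_reflect _ z hz, eval_reflect _ z hz, eval_reflect _ z hz, map_mul, hprod]
    rw [map_mul]
    ring
  · push_neg at hz
    obtain ⟨i, hi⟩ := hz
    have : eval z (∏ j : Fin n, (X j : MvPolynomial (Fin n) ℂ)) = 0 := by
      rw [map_prod]
      apply Finset.prod_eq_zero (Finset.mem_univ i)
      simpa using hi
    simp only [map_mul, this, mul_zero]

private lemma reflect_smul (c : ℂ) (hc : c ≠ 0) (p : MvPolynomial (Fin n) ℂ) :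
    reflectPoly (c • p) = (starRingEnd ℂ c) • reflectPoly p := by
  have hsupp : (c • p).support = p.support := by
    ext a
    simp only [mem_support_iff, coeff_smul, smul_eq_mul, mul_ne_zero_iff]
    exact ⟨fun h => h.2, fun h => ⟨hc, h⟩⟩
  have hdeg : ∀ i, (c • p).degreeOf i = p.degreeOf i := by
    intro i; rw [degreeOf_eq_sup, degreeOf_eq_sup, hsupp]
  rw [reflectPoly, reflectPoly, hsupp, Finset.smul_sum]
  apply Finset.sum_congr rfl
  intro a _
  rw [coeff_smul, smul_eq_mul, map_mul, smul_monomial]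
  simp only [hdeg, smul_eq_mul]

private lemma reflect_one : reflectPoly (1 : MvPolynomial (Fin n) ℂ) = 1 := by
  rw [reflectPoly]
  have hsupp : (1 : MvPolynomial (Fin n) ℂ).support = {0} := by
    ext a
    simp only [mem_support_iff, Finset.mem_singleton]
    rw [← C_1, coeff_C]
    split <;> simp_all [eq_comm]
  rw [hsupp, Finset.sum_singleton]
  have h0 : ∀ i : Fin n, (1 : MvPolynomial (Fin n) ℂ).degreeOf i = 0 := by
    intro i; rw [degreeOf_eq_sup, hsupp]; simp
  have he : (Finsupp.equivFunOnFinite.symm fun i =>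
      (1 : MvPolynomial (Fin n) ℂ).degreeOf i - (0 : Fin n →₀ ℕ) i) = 0 := by
    ext i; rw [Finsupp.equivFunOnFinite_symm_apply_apply, h0 i]; rfl
  rw [he]
  rw [← C_1, coeff_C]
  simp [monomial_zero']

/-- a polynomial with all partial degrees zero is a constant -/
private lemma eq_C_of_degreeOf_eq_zero {s : MvPolynomial (Fin n) ℂ}
    (h : ∀ i, s.degreeOf i = 0) : s = C (coeff 0 s) := by
  ext m
  rcases eq_or_ne m 0 with rfl | hm
  · simp [coeff_C]
  · rw [coeff_C, if_neg (Ne.symm hm)]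
    by_contra hc
    have hmem : m ∈ s.support := mem_support_iff.mpr hc
    have : ∀ i, m i = 0 := fun i => Nat.le_zero.mp ((h i) ▸ mem_supp_le s hmem i)
    exact hm (Finsupp.ext this)

private lemma isUnit_eq_C {u : MvPolynomial (Fin n) ℂ} (hu : IsUnit u) :
    ∃ c : ℂ, c ≠ 0 ∧ u = C c := by
  obtain ⟨v, hv⟩ := IsUnit.exists_right_inv hu
  have hu0 : u ≠ 0 := by rintro rfl; simp at hv
  have hv0 : v ≠ 0 := by rintro rfl; simp at hv
  have hdeg : ∀ i, u.degreeOf i = 0 := by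
    intro i
    have := degreeOf_mul' i u v hu0 hv0
    rw [hv] at this
    have h1 : degreeOf i (1 : MvPolynomial (Fin n) ℂ) = 0 := by
      rw [degreeOf_eq_sup]
      have : (1 : MvPolynomial (Fin n) ℂ).support = {0} := by
        ext a
        simp only [mem_support_iff, Finset.mem_singleton]
        rw [← C_1, coeff_C]
        split <;> simp_all [eq_comm]
      rw [this]; simp
    omega
  refine ⟨coeff 0 u, ?_, eq_C_of_degreeOf_eq_zero hdeg⟩
  intro h
  exact hu0 (by rw [eq_C_of_degreeOf_eq_zero hdeg, h, map_zero])

/-- on the torus, the reflection vanishes wherever `p` does -/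
private lemma torus_eval_reflect {p : MvPolynomial (Fin n) ℂ} {z : Fin n → ℂ}
    (hz : z ∈ torus n) (hpz : eval z p = 0) : eval z (reflectPoly p) = 0 := by
  have hz0 : ∀ i, z i ≠ 0 := fun i h => by simp [torus, h] at hz; exact one_ne_zero ((hz i).symm.trans (by simp [h]))
  have hinv : (fun i => (starRingEnd ℂ (z i))⁻¹) = z := by
    funext i
    have h1 : ‖z i‖ = 1 := hz i
    rw [inv_eq_iff_eq_inv, Complex.inv_def]
    rw [Complex.normSq_eq_norm_sq, h1]
    simp
  rw [eval_reflect p z hz0, hinv, hpz, map_zero, mul_zero]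

/-- the determining property applied to a polynomial test function, plus Nullstellensatz -/
private lemma dvd_pow_of_toral {p g : MvPolynomial (Fin n) ℂ} (hp : IsToralPoly p)
    (hvan : ∀ z ∈ torus n ∩ zeroSet p, eval z g = 0) : ∃ N : ℕ, p ∣ g ^ N := by
  have hval : ∀ z ∈ zeroSet p, eval z g = 0 := by
    apply hp.2 (fun z => eval z g)
    · intro x _
      exact ⟨Set.univ, isOpen_univ, trivial, fun z => eval z g,
        ((AnalyticOnNhd.eval_mvPolynomial g).differentiableOn), fun y _ => rfl⟩
    · exact hvan
  have hmem : g ∈ vanishingIdeal ℂ (zeroLocus ℂ (Ideal.span {p})) := by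
    rw [mem_vanishingIdeal_iff]
    intro x hx
    apply hval
    exact hx p (Ideal.subset_span rfl)
  rw [vanishingIdeal_zeroLocus_eq_radical] at hmem
  obtain ⟨N, hN⟩ := hmem
  exact ⟨N, (Ideal.mem_span_singleton).mp hN⟩

/-- Claim 1: every prime factor of a nonzero toral polynomial is essentially symmetric. -/
private lemma prime_factor_symm {p q : MvPolynomial (Fin n) ℂ} (hp : IsToralPoly p)
    (hp0 : p ≠ 0) (hq : Prime q) (hqp : q ∣ p) :
    ∃ c : ℂ, c ≠ 0 ∧ reflectPoly q = C c * q := by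
  have hq0 : q ≠ 0 := hq.ne_zero
  have hfin := FiniteMultiplicity.of_prime_left hq hp0
  obtain ⟨r, hpr, hqr⟩ := hfin.exists_eq_pow_mul_and_not_dvd
  set k := multiplicity q p
  -- the test function
  set g := r * reflectPoly q with hg
  have hvan : ∀ z ∈ torus n ∩ zeroSet p, eval z g = 0 := by
    rintro z ⟨hzt, hzp⟩
    have : eval z p = 0 := hzp
    rw [hpr, map_mul, map_pow] at this
    rcases mul_eq_zero.mp this with h | h
    · have hq' : eval z q = 0 := by
        by_contra hne
        exact (pow_ne_zero k hne) h
      rw [hg, map_mul, torus_eval_reflect hzt hq', mul_zero]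
    · rw [hg, map_mul, h, zero_mul]
  obtain ⟨N, hN⟩ := dvd_pow_of_toral hp hvan
  have hqgN : q ∣ g ^ N := dvd_trans hqp hN
  rw [hg, mul_pow] at hqgN
  rcases hq.dvd_or_dvd hqgN with h | h
  · exact absurd (hq.dvd_of_dvd_pow h) hqr
  · -- q ∣ (reflectPoly q)^N hence q ∣ reflectPoly q
    have hqrq : q ∣ reflectPoly q := hq.dvd_of_dvd_pow h
    obtain ⟨s, hs⟩ := hqrq
    have hs0 : s ≠ 0 := by
      rintro rfl
      rw [mul_zero] at hs
      exact reflect_ne_zero hq0 hs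
    have hsdeg : ∀ i, s.degreeOf i = 0 := by
      intro i
      have h1 := degreeOf_reflect_le q i
      rw [hs, degreeOf_mul' i q s hq0 hs0] at h1
      omega
    have hsC := eq_C_of_degreeOf_eq_zero hsdeg
    refine ⟨coeff 0 s, ?_, by rw [hs, hsC, mul_comm]; simp⟩
    intro h0
    exact hs0 (by rw [hsC, h0, map_zero])

end AuxLemmas

private lemma reflect_C {n : ℕ} (c : ℂ) : reflectPoly (C c : MvPolynomial (Fin n) ℂ) = C (starRingEnd ℂ c) := by
  rcases eq_or_ne c 0 with rfl | hc
  · simp only [map_zero]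
    rw [reflectPoly]
    simp
  · have : (C c : MvPolynomial (Fin n) ℂ) = c • 1 := by rw [smul_eq_C_mul, mul_one]
    rw [this, reflect_smul c hc, reflect_one, smul_eq_C_mul, mul_one]

private lemma reflect_eq_C_mul {n : ℕ} (p : MvPolynomial (Fin n) ℂ) (hp : IsToralPoly p)
    (hp0 : p ≠ 0) : ∃ C0 : ℂ, C0 ≠ 0 ∧ reflectPoly p = C C0 * p := by
  classical
  obtain ⟨u, hu⟩ := UniqueFactorizationMonoid.factors_prod hp0
  have main : ∀ F : Multiset (MvPolynomial (Fin n) ℂ),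
      (∀ q ∈ F, ∃ c : ℂ, c ≠ 0 ∧ reflectPoly q = C c * q) → (∀ q ∈ F, q ≠ 0) →
      F.prod ≠ 0 ∧ ∃ c : ℂ, c ≠ 0 ∧ reflectPoly F.prod = C c * F.prod := by
    intro F
    induction F using Multiset.induction with
    | empty =>
      intro _ _
      exact ⟨one_ne_zero, 1, one_ne_zero, by rw [Multiset.prod_zero, reflect_one]; simp⟩
    | cons q F ih =>
      intro hsym hne
      obtain ⟨hF0, c2, hc2, hrF⟩ := ih (fun r hr => hsym r (Multiset.mem_cons_of_mem hr))
        (fun r hr => hne r (Multiset.mem_cons_of_mem hr))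
      obtain ⟨c1, hc1, hrq⟩ := hsym q (Multiset.mem_cons_self q F)
      have hq0 : q ≠ 0 := hne q (Multiset.mem_cons_self q F)
      rw [Multiset.prod_cons]
      refine ⟨mul_ne_zero hq0 hF0, c1 * c2, mul_ne_zero hc1 hc2, ?_⟩
      rw [reflect_mul q F.prod hq0 hF0, hrq, hrF, map_mul]
      ring
  obtain ⟨hF0, c, hc0, hcr⟩ := main (UniqueFactorizationMonoid.factors p)
    (fun q hq => prime_factor_symm hp hp0 (UniqueFactorizationMonoid.prime_of_factor q hq)
      (UniqueFactorizationMonoid.dvd_of_mem_factors hq))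
    (fun q hq => (UniqueFactorizationMonoid.prime_of_factor q hq).ne_zero)
  obtain ⟨cu, hcu0, hcuC⟩ := isUnit_eq_C u.isUnit
  have hp_eq : p = (UniqueFactorizationMonoid.factors p).prod * C cu := by rw [← hcuC, hu]
  have hCcu0 : (C cu : MvPolynomial (Fin n) ℂ) ≠ 0 := fun h => hcu0 (by simpa using h)
  have hFp : C cu⁻¹ * p = (UniqueFactorizationMonoid.factors p).prod := by
    conv_lhs => rw [hp_eq]
    rw [← mul_assoc, mul_comm (C cu⁻¹) _, mul_assoc, ← map_mul, inv_mul_cancel₀ hcu0,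
      map_one, mul_one]
  have h1 : reflectPoly p = (C c * (C cu⁻¹ * p)) * C (starRingEnd ℂ cu) := by
    conv_lhs => rw [hp_eq]
    rw [reflect_mul _ _ hF0 hCcu0, hcr, reflect_C, hFp]
  refine ⟨c * starRingEnd ℂ cu * cu⁻¹, by
    simp only [ne_eq, mul_eq_zero, not_or]
    exact ⟨⟨hc0, fun h => hcu0 (by simpa using h)⟩, inv_ne_zero hcu0⟩, ?_⟩
  rw [h1, map_mul, map_mul]
  ring

/-- Every toral polynomial is essentially `𝕋ⁿ`-symmetric: either `p = 0` or
there is a unimodular `τ` with `(τp)^~ = τp`. -/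
theorem statement12 {n : ℕ} (p : MvPolynomial (Fin n) ℂ) (hp : IsToralPoly p) :
    p = 0 ∨ ∃ τ : ℂ, ‖τ‖ = 1 ∧ reflectPoly (τ • p) = τ • p := by
  by_cases hp0 : p = 0
  · exact Or.inl hp0
  right
  obtain ⟨C0, hC0, hrefl⟩ := reflect_eq_C_mul p hp hp0
  -- `C0` is unimodular, by comparing coefficient norms
  have hnorm : ‖C0‖ = 1 := by
    have hmem : ∀ a ∈ p.support, reflExp p a ∈ p.support ∧
        C0 * coeff (reflExp p a) p = starRingEnd ℂ (coeff a p) := by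
      intro a ha
      have h1 := coeff_reflect p ha
      rw [hrefl, coeff_C_mul] at h1
      refine ⟨mem_support_iff.mpr ?_, h1⟩
      intro h
      rw [h, mul_zero] at h1
      exact (mem_support_iff.mp ha) (by simpa using h1.symm)
    set S := ∑ a ∈ p.support, Complex.normSq (coeff a p) with hS
    have hT : p.support.image (reflExp p) = p.support := by
      apply Finset.eq_of_subset_of_card_le
      · intro b hb
        obtain ⟨a, ha, rfl⟩ := Finset.mem_image.mp hb
        exact (hmem a ha).1
      · rw [Finset.card_image_of_injOn (fun a ha b hb h => reflExp_injOn p ha hb h)]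
    have hsum1 : ∑ a ∈ p.support, Complex.normSq (coeff (reflExp p a) p) = S := by
      have himg : ∑ b ∈ p.support.image (reflExp p), Complex.normSq (coeff b p) =
          ∑ a ∈ p.support, Complex.normSq (coeff (reflExp p a) p) :=
        Finset.sum_image (fun a ha b hb h => reflExp_injOn p ha hb h)
      rw [hT] at himg
      rw [hS]
      exact himg.symm
    have hsum2 : Complex.normSq C0 * S = S := by
      nth_rewrite 2 [hS]
      rw [← hsum1, Finset.mul_sum]
      apply Finset.sum_congr rfl
      intro a ha
      rw [← Complex.normSq_mul, (hmem a ha).2, Complex.normSq_conj]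
    have hSpos : 0 < S := by
      obtain ⟨a, ha⟩ := support_nonempty.mpr hp0
      have h1 : 0 < Complex.normSq (coeff a p) :=
        Complex.normSq_pos.mpr (mem_support_iff.mp ha)
      have h2 : ∀ b ∈ p.support, 0 ≤ Complex.normSq (coeff b p) :=
        fun b _ => Complex.normSq_nonneg _
      exact Finset.sum_pos' h2 ⟨a, ha, h1⟩
    have hns : Complex.normSq C0 = 1 := by
      have h1 : Complex.normSq C0 * S = 1 * S := by rw [one_mul, hsum2]
      exact mul_right_cancel₀ (ne_of_gt hSpos) h1
    have habs : ‖C0‖ ^ 2 = 1 := by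
      rw [Complex.sq_norm]
      exact hns
    nlinarith [norm_nonneg C0]
  -- take a square root of `C0`
  set τ := Complex.exp (Complex.log C0 / 2) with hτ
  have hτ2 : τ ^ 2 = C0 := by
    rw [hτ, ← Complex.exp_nat_mul]
    push_cast
    rw [mul_div_cancel₀ _ (two_ne_zero), Complex.exp_log hC0]
  have hτn : ‖τ‖ = 1 := by
    rw [hτ, Complex.norm_exp]
    have : (Complex.log C0 / 2).re = Real.log ‖C0‖ / 2 := by
      rw [Complex.div_re]
      simp [Complex.log_re]
      ring
    rw [this, hnorm, Real.log_one, zero_div, Real.exp_zero]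
  have hτ0 : τ ≠ 0 := by
    intro h
    rw [h] at hτn
    simp at hτn
  have hτabs : Complex.normSq τ = 1 := by
    rw [Complex.normSq_eq_norm_sq, hτn]
    norm_num
  have hconj : starRingEnd ℂ τ * C0 = τ := by
    rw [← hτ2]
    have h2 : starRingEnd ℂ τ * τ ^ 2 = (τ * starRingEnd ℂ τ) * τ := by ring
    rw [h2, Complex.mul_conj, hτabs]
    simp
  refine ⟨τ, hτn, ?_⟩
  rw [reflect_smul τ hτ0, hrefl, smul_eq_C_mul, smul_eq_C_mul, ← mul_assoc, ← map_mul, hconj]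
end
end

section
/- Let p ∈ ℂ[z_1,…,z_n] be a nonconstant-quotient-producing polynomial that does not vanish on 𝔻^n and has no nonconstant essentially 𝕋^n-symmetric divisor, let h be an n-tuple of nonnegative integers, and suppose the rational inner function φ(z) = z^h · p^~(z)/p(z) is nonconstant. If α ∈ 𝔻 ∪ 𝔼, then the polynomial g_α(z) = z^h p^~(z) − α p(z) is atoral; equivalently, the level set Z_{φ−α} is an atoral algebraic set. -/
open MvPolynomial

noncomputable section

namespace Statement15Aux

open MvPolynomial

variable {n : ℕ}

/-- Polynomial evaluation is differentiable. -/
lemma eval_differentiable (q : MvPolynomial (Fin n) ℂ) :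
    Differentiable ℂ fun z : Fin n → ℂ => eval z q := by
  induction q using MvPolynomial.induction_on with
  | C a => simpa using differentiable_const a
  | add p q hp hq =>
      simp only [eval_add]
      exact hp.add hq
  | mul_X p i hp =>
      simp only [eval_mul, eval_X]
      exact hp.mul (differentiable_pi.mp differentiable_id i)

/-- Two polynomials agreeing off the coordinate hyperplanes agree. -/
lemma eq_of_eval_eq_off_axes {P Q : MvPolynomial (Fin n) ℂ}
    (h : ∀ z : Fin n → ℂ, (∀ i, z i ≠ 0) → eval z P = eval z Q) : P = Q := by
  have hM : ∀ z : Fin n → ℂ,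
      eval z ((∏ i, X i) * P) = eval z ((∏ i, X i) * Q) := by
    intro z
    by_cases hz : ∀ i, z i ≠ 0
    · simp only [eval_mul]; rw [h z hz]
    · push_neg at hz
      obtain ⟨i, hi⟩ := hz
      have h0 : eval z (∏ j : Fin n, (X j : MvPolynomial (Fin n) ℂ)) = 0 := by
        rw [map_prod]
        exact Finset.prod_eq_zero (Finset.mem_univ i) (by simpa using hi)
      simp [eval_mul, h0]
  have hfe := MvPolynomial.funext hM
  have hMne : (∏ i, (X i : MvPolynomial (Fin n) ℂ)) ≠ 0 := by
    intro h0
    have h1 : eval (fun _ => (1 : ℂ)) (∏ i, (X i : MvPolynomial (Fin n) ℂ)) = 1 := by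
      simp
    rw [h0] at h1
    simp at h1
  exact mul_left_cancel₀ hMne hfe

/-- Degree in each variable is additive for products of nonzero polynomials. -/
lemma degreeOf_mul_eq' (i : Fin n) (f g : MvPolynomial (Fin n) ℂ)
    (hf : f ≠ 0) (hg : g ≠ 0) :
    degreeOf i (f * g) = degreeOf i f + degreeOf i g := by
  cases n with
  | zero => exact i.elim0
  | succ m =>
    have key : ∀ P Q : MvPolynomial (Fin (m + 1)) ℂ, P ≠ 0 → Q ≠ 0 →
        degreeOf 0 (P * Q) = degreeOf 0 P + degreeOf 0 Q := by
      intro P Q hP hQ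
      have hP' : finSuccEquiv ℂ m P ≠ 0 := by
        intro h0
        exact hP ((map_eq_zero_iff _ (finSuccEquiv ℂ m).injective).mp h0)
      have hQ' : finSuccEquiv ℂ m Q ≠ 0 := by
        intro h0
        exact hQ ((map_eq_zero_iff _ (finSuccEquiv ℂ m).injective).mp h0)
      rw [← natDegree_finSuccEquiv, ← natDegree_finSuccEquiv, ← natDegree_finSuccEquiv,
        map_mul, Polynomial.natDegree_mul hP' hQ']
    set e : Fin (m + 1) ≃ Fin (m + 1) := Equiv.swap i 0 with he
    have hrd : ∀ P : MvPolynomial (Fin (m + 1)) ℂ,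
        degreeOf i P = degreeOf 0 (rename e P) := by
      intro P
      have := degreeOf_rename_of_injective (p := P) (f := (e : Fin (m+1) → Fin (m+1)))
        e.injective i
      rw [← this, he, Equiv.swap_apply_left]
    have hrne : ∀ P : MvPolynomial (Fin (m + 1)) ℂ, P ≠ 0 → rename e P ≠ 0 := by
      intro P hP h0
      exact hP ((map_eq_zero_iff _ (rename_injective _ e.injective)).mp h0)
    rw [hrd, hrd, hrd, map_mul, key _ _ (hrne f hf) (hrne g hg)]

/-- Constant polynomial criterion. -/
lemma eq_C_of_degreeOf_eq_zero {t : MvPolynomial (Fin n) ℂ}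
    (h : ∀ i, degreeOf i t = 0) : t = C (coeff 0 t) := by
  apply MvPolynomial.ext
  intro m
  rw [coeff_C]
  by_cases hm : (0 : Fin n →₀ ℕ) = m
  · rw [if_pos hm, ← hm]
  · rw [if_neg hm]
    by_contra hc
    have hmem : m ∈ t.support := mem_support_iff.mpr hc
    apply hm
    ext i
    have := monomial_le_degreeOf i hmem
    rw [h i] at this
    simpa using (Nat.le_zero.mp this).symm

end Statement15Aux
namespace Statement15Aux

open MvPolynomial

variable {n : ℕ}

lemma zeroSet_eq_zeroLocus (q : MvPolynomial (Fin n) ℂ) :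
    zeroSet q = zeroLocus ℂ (Ideal.span {q}) := by
  ext x
  constructor
  · intro hx f hf
    obtain ⟨c, rfl⟩ := Ideal.mem_span_singleton'.mp hf
    simp only [map_mul]
    rw [show aeval x q = 0 from hx, mul_zero]
  · intro hx
    exact hx q (Ideal.subset_span rfl)

lemma isAlgebraicSet_zeroSet (q : MvPolynomial (Fin n) ℂ) :
    IsAlgebraicSet (zeroSet q) :=
  ⟨{q}, by simp⟩

lemma isAlgebraicSet_inter_zeroSet {A : Set (Fin n → ℂ)} (hA : IsAlgebraicSet A)
    (f : MvPolynomial (Fin n) ℂ) : IsAlgebraicSet (A ∩ zeroSet f) := by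
  classical
  obtain ⟨S, rfl⟩ := hA
  refine ⟨insert f S, ?_⟩
  rw [Finset.set_biInter_insert]
  rw [Set.inter_comm]

lemma zeroLocus_vanishingIdeal_of_algebraic {A : Set (Fin n → ℂ)}
    (hA : IsAlgebraicSet A) : zeroLocus ℂ (vanishingIdeal ℂ A) = A := by
  obtain ⟨S, rfl⟩ := hA
  apply subset_antisymm
  · intro x hx
    simp only [Set.mem_iInter]
    intro q hq
    refine hx q (mem_vanishingIdeal_iff.mpr ?_)
    intro y hy
    simp only [Set.mem_iInter] at hy
    exact hy q hq
  · exact zeroLocus_vanishingIdeal_le _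

lemma variety_nonempty {V : Set (Fin n → ℂ)} (hV : IsVariety V) : V.Nonempty := by
  by_contra hne
  rw [Set.not_nonempty_iff_eq_empty] at hne
  exact hV.2 ⟨0, Fin.elim0, fun i => i.elim0, by simp [hne]⟩

/-- A variety covered by finitely many algebraic sets is inside one of them. -/
lemma variety_subset_of_subset_iUnion {V : Set (Fin n → ℂ)} (hV : IsVariety V)
    {m : ℕ} {B : Fin m → Set (Fin n → ℂ)} (hB : ∀ i, IsAlgebraicSet (B i))
    (hsub : V ⊆ ⋃ i, B i) : ∃ i, V ⊆ B i := by
  by_contra hc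
  push_neg at hc
  apply hV.2
  refine ⟨m, fun i => V ∩ B i, fun i => ⟨?_, ?_⟩, ?_⟩
  · obtain ⟨S, hS⟩ := hB i
    obtain ⟨T, hT⟩ := hV.1
    refine ⟨T ∪ S, ?_⟩
    ext x
    simp only [Set.mem_inter_iff, hT, hS, Set.mem_iInter, Finset.mem_union]
    constructor
    · rintro ⟨h1, h2⟩ q hq
      rcases hq with hq | hq
      · exact h1 q hq
      · exact h2 q hq
    · intro hx
      exact ⟨fun q hq => hx q (Or.inl hq), fun q hq => hx q (Or.inr hq)⟩
  · refine Set.ssubset_iff_subset_ne.mpr ⟨Set.inter_subset_left, ?_⟩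
    intro heq
    obtain ⟨x, hxV, hxB⟩ := Set.not_subset.mp (hc i)
    rw [← heq] at hxV
    exact hxB hxV.2
  · apply subset_antisymm
    · intro x hx
      obtain ⟨_, ⟨i, rfl⟩, hxB⟩ := hsub hx
      exact Set.mem_iUnion.mpr ⟨i, hx, hxB⟩
    · intro x hx
      obtain ⟨_, ⟨i, rfl⟩, hx2⟩ := hx
      exact hx2.1

lemma vanishingIdeal_prime_of_variety {V : Set (Fin n → ℂ)} (hV : IsVariety V) :
    (vanishingIdeal ℂ V).IsPrime := by
  constructor
  · intro htop
    obtain ⟨x, hx⟩ := variety_nonempty hV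
    have h1 : (1 : MvPolynomial (Fin n) ℂ) ∈ vanishingIdeal ℂ V := htop ▸ trivial
    have := mem_vanishingIdeal_iff.mp h1 x hx
    simp at this
  · intro f g hfg
    have hcov : V ⊆ ⋃ i, (![zeroSet f, zeroSet g] : Fin 2 → Set (Fin n → ℂ)) i := by
      intro x hx
      have := mem_vanishingIdeal_iff.mp hfg x hx
      rw [map_mul] at this
      rcases mul_eq_zero.mp this with h | h
      · exact Set.mem_iUnion.mpr ⟨0, h⟩
      · exact Set.mem_iUnion.mpr ⟨1, h⟩
    obtain ⟨i, hi⟩ := variety_subset_of_subset_iUnion hV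
      (B := ![zeroSet f, zeroSet g]) (fun i => by fin_cases i <;> exact isAlgebraicSet_zeroSet _)
      hcov
    fin_cases i
    · exact Or.inl (mem_vanishingIdeal_iff.mpr fun x hx => hi hx)
    · exact Or.inr (mem_vanishingIdeal_iff.mpr fun x hx => hi hx)

lemma vanishingIdeal_zeroSet_of_prime {q : MvPolynomial (Fin n) ℂ} (hq : Prime q) :
    vanishingIdeal ℂ (zeroSet q) = Ideal.span {q} := by
  rw [zeroSet_eq_zeroLocus, vanishingIdeal_zeroLocus_eq_radical]
  exact Ideal.IsPrime.radical ((Ideal.span_singleton_prime hq.ne_zero).mpr hq)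

lemma zeroSet_nonempty_of_prime {q : MvPolynomial (Fin n) ℂ} (hq : Prime q) :
    (zeroSet q).Nonempty := by
  by_contra hne
  rw [Set.not_nonempty_iff_eq_empty] at hne
  have h1 : (1 : MvPolynomial (Fin n) ℂ) ∈ vanishingIdeal ℂ (zeroSet q) := by
    rw [mem_vanishingIdeal_iff, hne]
    simp
  rw [vanishingIdeal_zeroSet_of_prime hq, Ideal.mem_span_singleton] at h1
  exact hq.not_unit (isUnit_of_dvd_one h1)

lemma isVariety_zeroSet_of_prime {q : MvPolynomial (Fin n) ℂ} (hq : Prime q) :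
    IsVariety (zeroSet q) := by
  refine ⟨isAlgebraicSet_zeroSet q, ?_⟩
  rintro ⟨m, B, hB, hunion⟩
  -- pick witnesses
  have hwit : ∀ i : Fin m, ∃ f : MvPolynomial (Fin n) ℂ,
      (∀ x ∈ B i, eval x f = 0) ∧ ∃ x ∈ zeroSet q, eval x f ≠ 0 := by
    intro i
    obtain ⟨x, hxZ, hxB⟩ := Set.exists_of_ssubset (hB i).2
    have hBi : zeroLocus ℂ (vanishingIdeal ℂ (B i)) = B i :=
      zeroLocus_vanishingIdeal_of_algebraic (hB i).1
    have hxnl : x ∉ zeroLocus ℂ (vanishingIdeal ℂ (B i)) := by rw [hBi]; exact hxB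
    simp only [mem_zeroLocus_iff, not_forall] at hxnl
    obtain ⟨f, hf, hfx⟩ := hxnl
    exact ⟨f, fun y hy => mem_vanishingIdeal_iff.mp hf y hy, x, hxZ, hfx⟩
  choose f hf0 hfx using hwit
  have hF : (∏ i, f i) ∈ vanishingIdeal ℂ (zeroSet q) := by
    rw [mem_vanishingIdeal_iff]
    intro x hx
    rw [hunion] at hx
    obtain ⟨_, ⟨i, rfl⟩, hxB⟩ := hx
    rw [map_prod]
    exact Finset.prod_eq_zero (Finset.mem_univ i) (hf0 i x hxB)
  rw [vanishingIdeal_zeroSet_of_prime hq, Ideal.mem_span_singleton] at hF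
  obtain ⟨i, _, hdvd⟩ := (hq.dvd_finset_prod_iff f).mp hF
  obtain ⟨x, hxZ, hfxne⟩ := hfx i
  apply hfxne
  have : f i ∈ vanishingIdeal ℂ (zeroSet q) := by
    rw [vanishingIdeal_zeroSet_of_prime hq, Ideal.mem_span_singleton]
    exact hdvd
  exact mem_vanishingIdeal_iff.mp this x hxZ

end Statement15Aux
namespace Statement15Aux

open MvPolynomial

variable {n : ℕ}

lemma eval_reflect (p : MvPolynomial (Fin n) ℂ) (z : Fin n → ℂ) (hz : ∀ i, z i ≠ 0) :
    eval z (reflectPoly p) =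
      (∏ i, z i ^ degreeOf i p) *
        (starRingEnd ℂ) (eval (fun i => ((starRingEnd ℂ) (z i))⁻¹) p) := by
  rw [reflectPoly, map_sum,
    eval_eq' (fun i => ((starRingEnd ℂ) (z i))⁻¹) p, map_sum, Finset.mul_sum]
  apply Finset.sum_congr rfl
  intro a ha
  rw [eval_monomial, Finsupp.prod_pow]
  simp only [Finsupp.coe_equivFunOnFinite_symm]
  rw [map_mul, map_prod]
  have hle : ∀ i, a i ≤ degreeOf i p := fun i => monomial_le_degreeOf i ha
  have hstep : ∀ i : Fin n,
      z i ^ (degreeOf i p - a i) = z i ^ degreeOf i p * ((z i)⁻¹) ^ a i := by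
    intro i
    rw [pow_sub₀ (z i) (hz i) (hle i), ← inv_pow]
  have hconj : ∀ i : Fin n,
      (starRingEnd ℂ) ((((starRingEnd ℂ) (z i))⁻¹) ^ a i) = ((z i)⁻¹) ^ a i := by
    intro i
    rw [map_pow, map_inv₀, Complex.conj_conj]
  calc (starRingEnd ℂ) (coeff a p) * ∏ i, z i ^ (degreeOf i p - a i)
      = (starRingEnd ℂ) (coeff a p) *
          ((∏ i, z i ^ degreeOf i p) * ∏ i, ((z i)⁻¹) ^ a i) := by
        rw [← Finset.prod_mul_distrib]
        congr 1
        exact Finset.prod_congr rfl fun i _ => hstep i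
    _ = (∏ i, z i ^ degreeOf i p) *
          ((starRingEnd ℂ) (coeff a p) *
            ∏ i, (starRingEnd ℂ) ((((starRingEnd ℂ) (z i))⁻¹) ^ a i)) := by
        rw [Finset.prod_congr rfl fun i _ => hconj i]
        ring

lemma degreeOf_reflect_le (p : MvPolynomial (Fin n) ℂ) (i : Fin n) :
    degreeOf i (reflectPoly p) ≤ degreeOf i p := by
  classical
  rw [degreeOf_le_iff]
  intro m hm
  rw [reflectPoly] at hm
  have hm2 := support_sum hm
  rw [Finset.mem_biUnion] at hm2
  obtain ⟨a, _, hma⟩ := hm2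
  have := support_monomial_subset hma
  rw [Finset.mem_singleton] at this
  subst this
  simp only [Finsupp.coe_equivFunOnFinite_symm]
  exact Nat.sub_le _ _

lemma coeff_reflect_top (p : MvPolynomial (Fin n) ℂ) :
    coeff (Finsupp.equivFunOnFinite.symm fun i => degreeOf i p) (reflectPoly p)
      = (starRingEnd ℂ) (coeff 0 p) := by
  classical
  rw [reflectPoly, coeff_sum]
  have hkey : ∀ b ∈ p.support, b ≠ 0 →
      coeff (Finsupp.equivFunOnFinite.symm fun i => degreeOf i p)
        (monomial (Finsupp.equivFunOnFinite.symm fun i => degreeOf i p - b i)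
          ((starRingEnd ℂ) (coeff b p))) = 0 := by
    intro b hb hbne
    rw [coeff_monomial, if_neg]
    intro heq
    apply hbne
    have hfun := Finsupp.equivFunOnFinite.symm.injective heq
    ext i
    have h1 : degreeOf i p - b i = degreeOf i p := congrFun hfun i
    have h2 : b i ≤ degreeOf i p := monomial_le_degreeOf i hb
    simp only [Finsupp.coe_zero, Pi.zero_apply]
    omega
  by_cases h0 : (0 : Fin n →₀ ℕ) ∈ p.support
  · have hexp : (Finsupp.equivFunOnFinite.symm fun i => degreeOf i p - (0 : Fin n →₀ ℕ) i)
        = (Finsupp.equivFunOnFinite.symm fun i => degreeOf i p) := by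
      congr 1
    rw [Finset.sum_eq_single_of_mem 0 h0 hkey, coeff_monomial, if_pos hexp]
  · rw [Finset.sum_eq_zero (fun b hb => hkey b hb (fun hbe => h0 (hbe ▸ hb)))]
    rw [notMem_support_iff] at h0
    rw [h0, map_zero]

lemma degreeOf_reflect (p : MvPolynomial (Fin n) ℂ) (h0 : coeff 0 p ≠ 0) (i : Fin n) :
    degreeOf i (reflectPoly p) = degreeOf i p := by
  refine le_antisymm (degreeOf_reflect_le p i) ?_
  have hmem : (Finsupp.equivFunOnFinite.symm fun i => degreeOf i p) ∈
      (reflectPoly p).support := by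
    rw [mem_support_iff, coeff_reflect_top]
    simpa using h0
  have := monomial_le_degreeOf i hmem
  simpa using this

lemma reflect_mul (f g : MvPolynomial (Fin n) ℂ) (hf : f ≠ 0) (hg : g ≠ 0) :
    reflectPoly (f * g) = reflectPoly f * reflectPoly g := by
  apply eq_of_eval_eq_off_axes
  intro z hz
  rw [eval_mul, eval_reflect _ z hz, eval_reflect _ z hz, eval_reflect _ z hz, eval_mul,
    map_mul]
  have hdeg : ∀ i, degreeOf i (f * g) = degreeOf i f + degreeOf i g :=
    fun i => degreeOf_mul_eq' i f g hf hg
  simp_rw [hdeg, pow_add]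
  rw [Finset.prod_mul_distrib]
  ring

lemma reflect_reflect (p : MvPolynomial (Fin n) ℂ) (h0 : coeff 0 p ≠ 0) :
    reflectPoly (reflectPoly p) = p := by
  apply eq_of_eval_eq_off_axes
  intro z hz
  rw [eval_reflect _ z hz]
  have hw : ∀ i, ((starRingEnd ℂ) (z i))⁻¹ ≠ 0 := by
    intro i
    simp [hz i]
  rw [eval_reflect p _ hw]
  have hfun : (fun i => ((starRingEnd ℂ) (((starRingEnd ℂ) (z i))⁻¹))⁻¹) = z := by
    funext i
    rw [map_inv₀, Complex.conj_conj, inv_inv]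
  rw [hfun]
  simp_rw [degreeOf_reflect p h0]
  rw [map_mul, map_prod, Complex.conj_conj]
  have hconjpow : ∀ i : Fin n,
      (starRingEnd ℂ) ((((starRingEnd ℂ) (z i))⁻¹) ^ degreeOf i p)
        = ((z i)⁻¹) ^ degreeOf i p := by
    intro i
    rw [map_pow, map_inv₀, Complex.conj_conj]
  rw [Finset.prod_congr rfl fun i _ => hconjpow i]
  rw [show (∏ i, z i ^ degreeOf i p) * (((∏ i, ((z i)⁻¹) ^ degreeOf i p)) * eval z p)
      = ((∏ i, z i ^ degreeOf i p) * (∏ i, ((z i)⁻¹) ^ degreeOf i p)) * eval z p by ring]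
  rw [← Finset.prod_mul_distrib]
  rw [Finset.prod_eq_one fun i _ => by
    rw [← mul_pow, mul_inv_cancel₀ (hz i), one_pow]]
  rw [one_mul]

lemma reflect_smul (c : ℂ) (p : MvPolynomial (Fin n) ℂ) :
    reflectPoly (c • p) = ((starRingEnd ℂ) c) • reflectPoly p := by
  by_cases hc : c = 0
  · subst hc
    simp [reflectPoly]
  · have hsupp : (c • p).support = p.support := by
      apply subset_antisymm support_smul
      have hre : p = c⁻¹ • (c • p) := by
        rw [smul_smul, inv_mul_cancel₀ hc, one_smul]
      conv_lhs => rw [hre]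
      exact support_smul
    have hdeg : ∀ i, (c • p).degreeOf i = p.degreeOf i := by
      intro i
      rw [degreeOf_eq_sup, degreeOf_eq_sup, hsupp]
    rw [reflectPoly, reflectPoly, hsupp, Finset.smul_sum]
    apply Finset.sum_congr rfl
    intro a _
    simp only [hdeg, coeff_smul, smul_eq_mul, map_mul, smul_monomial]

lemma norm_eval_reflect_of_torus (p : MvPolynomial (Fin n) ℂ) {z : Fin n → ℂ}
    (hz : z ∈ torus n) : ‖eval z (reflectPoly p)‖ = ‖eval z p‖ := by
  have hz1 : ∀ i, ‖z i‖ = 1 := hz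
  have hz0 : ∀ i, z i ≠ 0 := by
    intro i h
    have := hz1 i
    rw [h] at this
    simp at this
  have hw : (fun i => ((starRingEnd ℂ) (z i))⁻¹) = z := by
    funext i
    symm
    apply eq_inv_of_mul_eq_one_left
    have h2 : Complex.normSq (z i) = 1 := by
      rw [Complex.normSq_eq_norm_sq, hz1 i, one_pow]
    rw [Complex.mul_conj, h2, Complex.ofReal_one]
  rw [eval_reflect p z hz0, hw, norm_mul]
  have h1 : ‖∏ i, z i ^ degreeOf i p‖ = 1 := by
    rw [norm_prod]
    apply Finset.prod_eq_one
    intro i _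
    rw [norm_pow, hz1 i, one_pow]
  rw [h1, one_mul, RCLike.norm_conj]

end Statement15Aux
namespace Statement15Aux

open MvPolynomial

variable {n : ℕ}

lemma zeroSet_subset_of_dvd {q g : MvPolynomial (Fin n) ℂ} (hdvd : q ∣ g) :
    zeroSet q ⊆ zeroSet g := by
  obtain ⟨t, rfl⟩ := hdvd
  intro x hx
  have hx' : eval x q = 0 := hx
  show eval x (q * t) = 0
  rw [map_mul, hx', zero_mul]

lemma exists_prime_factor_of_component {g : MvPolynomial (Fin n) ℂ} {Cpt : Set (Fin n → ℂ)}
    (hg0 : g ≠ 0) (hgu : ¬ IsUnit g) (hC : IsIrredComponent Cpt (zeroSet g)) :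
    ∃ q, Prime q ∧ q ∣ g ∧ Cpt = zeroSet q := by
  classical
  obtain ⟨m, V, hvar, hnc, hun, i0, rfl⟩ := hC
  set L := (UniqueFactorizationMonoid.factors g).toList with hL
  have hmemL : ∀ j : Fin L.length, L.get j ∈ UniqueFactorizationMonoid.factors g := by
    intro j
    rw [← Multiset.mem_toList]
    exact List.get_mem L j
  have hprime : ∀ j : Fin L.length, Prime (L.get j) :=
    fun j => UniqueFactorizationMonoid.prime_of_factor _ (hmemL j)
  have hdvd : ∀ j : Fin L.length, L.get j ∣ g :=
    fun j => UniqueFactorizationMonoid.dvd_of_mem_factors (hmemL j)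
  have hZ : zeroSet g = ⋃ j : Fin L.length, zeroSet (L.get j) := by
    ext x
    simp only [Set.mem_iUnion]
    constructor
    · intro hx
      obtain ⟨u, hu⟩ := UniqueFactorizationMonoid.factors_prod hg0
      have hevmul : eval x (UniqueFactorizationMonoid.factors g).prod *
          eval x (u : MvPolynomial (Fin n) ℂ) = 0 := by
        rw [← map_mul, hu]
        exact hx
      have hune : eval x (u : MvPolynomial (Fin n) ℂ) ≠ 0 :=
        (u.isUnit.map (eval x)).ne_zero
      have hprod : eval x (UniqueFactorizationMonoid.factors g).prod = 0 := by
        rcases mul_eq_zero.mp hevmul with hh | hh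
        · exact hh
        · exact absurd hh hune
      rw [← Multiset.prod_toList, ← hL] at hprod
      rw [map_list_prod, List.prod_eq_zero_iff, List.mem_map] at hprod
      obtain ⟨a, haL, ha0⟩ := hprod
      obtain ⟨j, hj⟩ := List.mem_iff_get.mp haL
      exact ⟨j, show eval x (L.get j) = 0 by rw [hj, ha0]⟩
    · rintro ⟨j, hj⟩
      exact zeroSet_subset_of_dvd (hdvd j) hj
  have hCsubg : V i0 ⊆ zeroSet g := by
    rw [hun]
    exact Set.subset_iUnion V i0
  obtain ⟨j, hj⟩ := variety_subset_of_subset_iUnion (hvar i0)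
    (fun j => isAlgebraicSet_zeroSet (L.get j)) (hZ ▸ hCsubg)
  have hqsub : zeroSet (L.get j) ⊆ ⋃ i, V i := by
    rw [← hun]
    exact zeroSet_subset_of_dvd (hdvd j)
  obtain ⟨k, hk⟩ := variety_subset_of_subset_iUnion (isVariety_zeroSet_of_prime (hprime j))
    (fun i => (hvar i).1) hqsub
  by_cases hik : k = i0
  · subst hik
    exact ⟨L.get j, hprime j, hdvd j, subset_antisymm hj hk⟩
  · exact absurd (hj.trans hk) (hnc i0 k (fun hh => hik hh.symm))

/-- The central algebraic fact: no prime can divide both `p` and `g_α`. -/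
lemma no_common_prime (p : MvPolynomial (Fin n) ℂ) (h : Fin n →₀ ℕ)
    (hp : ∀ z ∈ polydisk n, eval z p ≠ 0)
    (hnosym : ∀ r : MvPolynomial (Fin n) ℂ, r ∣ p →
        (∃ τ : ℂ, ‖τ‖ = 1 ∧ reflectPoly (τ • r) = τ • r) → ∃ c : ℂ, r = C c)
    (α : ℂ) (q : MvPolynomial (Fin n) ℂ) (hq : Prime q)
    (hqg : q ∣ monomial h (1 : ℂ) * reflectPoly p - C α * p) (hqp : q ∣ p) : False := by
  classical
  have h0mem : (fun _ => (0 : ℂ)) ∈ polydisk n := by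
    intro i
    norm_num
  have hp0 : constantCoeff p ≠ 0 := by
    have := hp _ h0mem
    rwa [eval_zero'] at this
  have hpne : p ≠ 0 := fun h0 => hp0 (by rw [h0, map_zero])
  have hcoeff0 : coeff 0 p ≠ 0 := by rwa [constantCoeff_eq] at hp0
  obtain ⟨s0, hs0⟩ := id hqp
  have hccq : constantCoeff q ≠ 0 := by
    intro h0
    apply hp0
    rw [hs0, map_mul, h0, zero_mul]
  have hqne : q ≠ 0 := hq.ne_zero
  have hcoeffq : coeff 0 q ≠ 0 := by rwa [constantCoeff_eq] at hccq
  -- q divides z^h * reflectPoly p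
  have hq2 : q ∣ monomial h (1 : ℂ) * reflectPoly p := by
    have hd : q ∣ C α * p := Dvd.dvd.mul_left hqp (C α)
    have := dvd_add hqg hd
    rwa [sub_add_cancel] at this
  -- constant polynomial contradiction helper
  have hnotC : ∀ c : ℂ, q ≠ C c := by
    intro c hc
    by_cases hc0 : c = 0
    · rw [hc0, map_zero] at hc
      exact hqne hc
    · exact hq.not_unit (hc ▸ (isUnit_iff_ne_zero.mpr hc0).map C)
  rcases (hq.2.2 _ _ hq2) with hqm | hqr
  · -- q divides the monomial: impossible
    rw [monomial_eq, map_one, one_mul] at hqm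
    rw [Finsupp.prod] at hqm
    obtain ⟨i, _, hqXe⟩ := (hq.dvd_finset_prod_iff _).mp hqm
    have hqX : q ∣ X i := hq.dvd_of_dvd_pow hqXe
    obtain ⟨t, ht⟩ := hqX
    have htne : t ≠ 0 := by
      intro h0
      rw [h0, mul_zero] at ht
      exact X_ne_zero i ht
    have hdeg : ∀ j, degreeOf j q + degreeOf j t
        = degreeOf j (X i : MvPolynomial (Fin n) ℂ) := by
      intro j
      rw [ht, degreeOf_mul_eq' j q t hqne htne]
    have hcct : constantCoeff t = 0 := by
      have : constantCoeff (X i : MvPolynomial (Fin n) ℂ) = 0 := by simp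
      rw [ht, map_mul] at this
      rcases mul_eq_zero.mp this with hh | hh
      · exact absurd hh hccq
      · exact hh
    by_cases hdi : degreeOf i q = 0
    · have hallq : ∀ j, degreeOf j q = 0 := by
        intro j
        by_cases hji : j = i
        · rw [hji]; exact hdi
        · have := hdeg j
          rw [degreeOf_X] at this
          rw [if_neg hji] at this
          omega
      exact hnotC _ (eq_C_of_degreeOf_eq_zero hallq)
    · have hallt : ∀ j, degreeOf j t = 0 := by
        intro j
        have := hdeg j
        rw [degreeOf_X] at this
        by_cases hji : j = i
        · rw [if_pos hji] at this
          subst hji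
          omega
        · rw [if_neg hji] at this
          omega
      have htC : t = C (coeff 0 t) := eq_C_of_degreeOf_eq_zero hallt
      have hct0 : coeff 0 t = 0 := by rwa [constantCoeff_eq] at hcct
      rw [hct0, map_zero] at htC
      exact htne htC
  · -- q divides reflectPoly p
    have hrpne : reflectPoly p ≠ 0 := by
      intro h0
      apply hpne
      rw [← reflect_reflect p hcoeff0, h0]
      simp [reflectPoly]
    obtain ⟨s, hs⟩ := hqr
    have hsne : s ≠ 0 := by
      intro h0
      rw [h0, mul_zero] at hs
      exact hrpne hs
    have hps : p = reflectPoly q * reflectPoly s := by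
      rw [← reflect_mul q s hqne hsne, ← hs, reflect_reflect p hcoeff0]
    have hrqne : reflectPoly q ≠ 0 := by
      intro h0
      rw [h0, zero_mul] at hps
      exact hpne hps
    by_cases hqrq : q ∣ reflectPoly q
    · obtain ⟨u, hu⟩ := hqrq
      have hune : u ≠ 0 := by
        intro h0
        rw [h0, mul_zero] at hu
        exact hrqne hu
      have hallu : ∀ i, degreeOf i u = 0 := by
        intro i
        have h1 : degreeOf i (reflectPoly q) ≤ degreeOf i q := degreeOf_reflect_le q i
        have h2 : degreeOf i (reflectPoly q) = degreeOf i q + degreeOf i u := by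
          rw [hu, degreeOf_mul_eq' i q u hqne hune]
        omega
      have huC : u = C (coeff 0 u) := eq_C_of_degreeOf_eq_zero hallu
      set c := coeff 0 u with hc
      have hcne : c ≠ 0 := by
        intro h0
        apply hune
        rw [huC, h0, map_zero]
      have hrq_eq : reflectPoly q = c • q := by
        rw [hu, huC, mul_comm, ← smul_eq_C_mul]
      have hq_eq : q = ((starRingEnd ℂ) c * c) • q := by
        conv_lhs => rw [← reflect_reflect q hcoeffq]
        rw [hrq_eq, reflect_smul, hrq_eq, smul_smul]
      have hcc1 : (starRingEnd ℂ) c * c = 1 := by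
        by_contra hne
        have : ((starRingEnd ℂ) c * c - 1) • q = 0 := by
          rw [sub_smul, one_smul, ← hq_eq, sub_self]
        rcases smul_eq_zero.mp this with hh | hh
        · exact hne (by linear_combination hh)
        · exact hqne hh
      have hnc : ‖c‖ = 1 := by
        have h2 : ‖c‖ * ‖c‖ = 1 := by
          have := congrArg norm hcc1
          rwa [norm_mul, RCLike.norm_conj, norm_one] at this
        nlinarith [norm_nonneg c]
      obtain ⟨θ, hθ⟩ := (Complex.norm_eq_one_iff c).mp hnc
      set τ := Complex.exp ((θ / 2 : ℝ) * Complex.I) with hτ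
      have hτn : ‖τ‖ = 1 := by
        rw [hτ]
        exact Complex.norm_exp_ofReal_mul_I _
      have hττ : τ * τ = c := by
        rw [hτ, ← Complex.exp_add, ← hθ]
        congr 1
        push_cast
        ring
      have hτconj : (starRingEnd ℂ) τ * c = τ := by
        rw [← hττ, ← mul_assoc]
        have hct : (starRingEnd ℂ) τ * τ = 1 := by
          rw [hτ, ← Complex.exp_conj, ← Complex.exp_add]
          have hx : (starRingEnd ℂ) (((θ / 2 : ℝ) : ℂ) * Complex.I) +
              ((θ / 2 : ℝ) : ℂ) * Complex.I = 0 := by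
            rw [map_mul, Complex.conj_ofReal, Complex.conj_I]
            ring
          rw [hx, Complex.exp_zero]
        rw [hct, one_mul]
      obtain ⟨c', hc'⟩ := hnosym q hqp ⟨τ, hτn, by
        rw [reflect_smul, hrq_eq, smul_smul, hτconj]⟩
      exact hnotC c' hc'
    · have hqdvd2 : q ∣ reflectPoly q * reflectPoly s := hps ▸ hqp
      rcases hq.2.2 _ _ hqdvd2 with hh | hh
      · exact hqrq hh
      · obtain ⟨w, hw⟩ := hh
        have hr_dvd : q * reflectPoly q ∣ p := by
          refine ⟨w, ?_⟩
          rw [hps, hw]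
          ring
        have hrefl : reflectPoly (q * reflectPoly q) = q * reflectPoly q := by
          rw [reflect_mul q (reflectPoly q) hqne hrqne, reflect_reflect q hcoeffq, mul_comm]
        obtain ⟨c', hc'⟩ := hnosym (q * reflectPoly q) hr_dvd ⟨1, by norm_num, by
          rw [one_smul, hrefl]⟩
        have hrne : q * reflectPoly q ≠ 0 := mul_ne_zero hqne hrqne
        have hc'ne : c' ≠ 0 := by
          intro h0
          rw [h0, map_zero] at hc'
          exact hrne hc'
        have : q ∣ C c' := hc' ▸ Dvd.intro _ rfl
        exact hq.not_unit (isUnit_of_dvd_unit this ((isUnit_iff_ne_zero.mpr hc'ne).map C))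

end Statement15Aux
/-- Let `p` be nonvanishing on `𝔻ⁿ` with no nonconstant essentially
`𝕋ⁿ`-symmetric divisor, and suppose `φ = z^h p^~/p` is nonconstant.  If `α ∈ 𝔻 ∪ 𝔼`
(i.e. `‖α‖ ≠ 1`), then the polynomial `g_α = z^h p^~ − α p`, whose zero set is the level
set `Z_{φ−α}`, is atoral. -/
theorem statement15 {n : ℕ} (p : MvPolynomial (Fin n) ℂ) (h : Fin n →₀ ℕ)
    (hp : ∀ z ∈ polydisk n, eval z p ≠ 0)
    (hnosym : ∀ r : MvPolynomial (Fin n) ℂ, r ∣ p →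
        (∃ τ : ℂ, ‖τ‖ = 1 ∧ reflectPoly (τ • r) = τ • r) → ∃ c : ℂ, r = C c)
    (hnonconst : ¬ ∃ c : ℂ, monomial h (1 : ℂ) * reflectPoly p = c • p)
    (α : ℂ) (hα : ‖α‖ ≠ 1) :
    IsAtoralPoly (monomial h (1 : ℂ) * reflectPoly p - C α * p) := by
  classical
  set g : MvPolynomial (Fin n) ℂ := monomial h (1 : ℂ) * reflectPoly p - C α * p with hgdef
  have hg0 : g ≠ 0 := by
    intro h0
    apply hnonconst
    refine ⟨α, ?_⟩
    have h1 := sub_eq_zero.mp h0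
    rw [h1, smul_eq_C_mul]
  refine ⟨Statement15Aux.isAlgebraicSet_zeroSet g, ?_⟩
  intro Cpt hC hdet
  by_cases hu : IsUnit g
  · obtain ⟨m, V, hvar, hnc, hun, i0, hCeq⟩ := hC
    obtain ⟨x, hx⟩ := Statement15Aux.variety_nonempty (hvar i0)
    have hxg : x ∈ zeroSet g := hun ▸ Set.mem_iUnion.mpr ⟨i0, hx⟩
    exact (hu.map (eval x)).ne_zero hxg
  obtain ⟨q, hq, hqg, hCq⟩ := Statement15Aux.exists_prime_factor_of_component hg0 hu hC
  have htor : ∀ z ∈ torus n ∩ Cpt, eval z p = 0 := by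
    rintro z ⟨hzt, hzC⟩
    have hzg : z ∈ zeroSet g := by
      rw [hCq] at hzC
      exact Statement15Aux.zeroSet_subset_of_dvd hqg hzC
    have hev : eval z g = 0 := hzg
    rw [hgdef, map_sub, map_mul, map_mul, eval_C, sub_eq_zero] at hev
    have hnm : ‖eval z (monomial h (1 : ℂ))‖ = 1 := by
      rw [eval_monomial, one_mul, Finsupp.prod_pow, norm_prod]
      apply Finset.prod_eq_one
      intro i _
      rw [norm_pow, hzt i, one_pow]
    have h2 : ‖eval z p‖ = ‖α‖ * ‖eval z p‖ := by
      calc ‖eval z p‖ = ‖eval z (reflectPoly p)‖ :=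
            (Statement15Aux.norm_eval_reflect_of_torus p hzt).symm
        _ = ‖eval z (monomial h (1 : ℂ))‖ * ‖eval z (reflectPoly p)‖ := by
            rw [hnm, one_mul]
        _ = ‖eval z (monomial h (1 : ℂ)) * eval z (reflectPoly p)‖ := (norm_mul _ _).symm
        _ = ‖α * eval z p‖ := by rw [hev]
        _ = ‖α‖ * ‖eval z p‖ := norm_mul _ _
    by_contra hne
    have hnz : ‖eval z p‖ ≠ 0 := by
      simpa [norm_eq_zero] using hne
    have h3 : 1 * ‖eval z p‖ = ‖α‖ * ‖eval z p‖ := by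
      rw [one_mul]
      exact h2
    exact hα (mul_right_cancel₀ hnz h3).symm
  have hex : ∃ z ∈ Cpt, eval z p ≠ 0 := by
    by_contra hall
    push_neg at hall
    have hpv : p ∈ vanishingIdeal ℂ (zeroSet q) :=
      mem_vanishingIdeal_iff.mpr fun x hx => hall x (hCq ▸ hx)
    rw [Statement15Aux.vanishingIdeal_zeroSet_of_prime hq, Ideal.mem_span_singleton] at hpv
    exact Statement15Aux.no_common_prime p h hp hnosym α q hq hqg hpv
  obtain ⟨z0, hz0C, hz0⟩ := hex
  have hHol : HolOn Cpt fun z => eval z p := by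
    intro x _
    exact ⟨Set.univ, isOpen_univ, trivial, fun z => eval z p,
      (Statement15Aux.eval_differentiable p).differentiableOn, fun y _ => rfl⟩
  exact hz0 (hdet (fun z => eval z p) hHol htor z0 hz0C)
end
end

section
/- Let p ∈ ℂ[z_1,…,z_n] be a nonconstant polynomial that does not vanish on 𝔻^n and has no nonconstant essentially 𝕋^n-symmetric divisor. Then p and its reflection p^~ are relatively prime, and consequently Z_p ∩ 𝕋^n (the singular set of the rational inner function z^h p^~/p) is contained in the algebraic set Z_p ∩ Z_{p^~}, an intersection of zero sets of two coprime polynomials (so of dimension at most n−2). -/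
open MvPolynomial

noncomputable section

namespace S18

lemma mem_support_le_degreeOf {n : ℕ} {p : MvPolynomial (Fin n) ℂ} {a : Fin n →₀ ℕ}
    (ha : a ∈ p.support) (i : Fin n) : a i ≤ p.degreeOf i :=
  monomial_le_degreeOf i ha

lemma eval₂_reflectPoly {n : ℕ} {L : Type*} [Field L] (f : ℂ →+* L) (u : Fin n → L)
    (hu : ∀ i, u i ≠ 0) (p : MvPolynomial (Fin n) ℂ) :
    eval₂ f u (reflectPoly p) =
      (∏ i, u i ^ p.degreeOf i) *
        eval₂ (f.comp (starRingEnd ℂ)) (fun i => (u i)⁻¹) p := by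
  rw [reflectPoly, eval₂_sum, eval₂_eq' (f.comp (starRingEnd ℂ)), Finset.mul_sum]
  refine Finset.sum_congr rfl fun a ha => ?_
  rw [eval₂_monomial, Finsupp.prod_fintype _ _ (fun i => pow_zero _)]
  simp only [Finsupp.coe_equivFunOnFinite_symm, RingHom.coe_comp, Function.comp_apply]
  rw [Finset.prod_congr rfl (fun i _ => pow_sub₀ (u i) (hu i) (mem_support_le_degreeOf ha i)),
    Finset.prod_mul_distrib]
  simp only [inv_pow]
  ring

lemma degreeOf_mul_eq'' {n : ℕ} {p q : MvPolynomial (Fin n) ℂ} (hp : p ≠ 0) (hq : q ≠ 0)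
    (i : Fin n) : degreeOf i (p * q) = degreeOf i p + degreeOf i q := by
  cases n with
  | zero => exact i.elim0
  | succ m =>
    have key : ∀ r : MvPolynomial (Fin (m+1)) ℂ,
        degreeOf i r = degreeOf 0 (rename (Equiv.swap i 0) r) := by
      intro r
      have := degreeOf_rename_of_injective (Equiv.swap i 0).injective (p := r) i
      rw [Equiv.swap_apply_left] at this
      exact this.symm
    rw [key, key p, key q, map_mul, ← natDegree_finSuccEquiv, ← natDegree_finSuccEquiv,
      ← natDegree_finSuccEquiv, map_mul]
    have h1 : finSuccEquiv ℂ m (rename (Equiv.swap i 0) p) ≠ 0 := by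
      simp only [ne_eq, EmbeddingLike.map_eq_zero_iff]
      intro h; exact hp ((map_eq_zero_iff _ (rename_injective _ (Equiv.swap i 0).injective)).mp h)
    have h2 : finSuccEquiv ℂ m (rename (Equiv.swap i 0) q) ≠ 0 := by
      simp only [ne_eq, EmbeddingLike.map_eq_zero_iff]
      intro h; exact hq ((map_eq_zero_iff _ (rename_injective _ (Equiv.swap i 0).injective)).mp h)
    exact Polynomial.natDegree_mul h1 h2

variable {n : ℕ}

local notation "K" => FractionRing (MvPolynomial (Fin n) ℂ)

def ι : MvPolynomial (Fin n) ℂ →+* K := algebraMap _ _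

lemma ι_inj : Function.Injective (ι (n := n)) := IsFractionRing.injective _ _

lemma ιX_ne (i : Fin n) : ι (X i) ≠ 0 := by
  intro h
  have : (X i : MvPolynomial (Fin n) ℂ) = 0 := ι_inj (by simpa using h)
  exact X_ne_zero i this

lemma ι_eq_eval₂ (p : MvPolynomial (Fin n) ℂ) :
    ι p = eval₂ ((ι (n := n)).comp C) (fun i => ι (X i)) p := by
  conv_lhs => rw [← eval₂_eta p]
  exact eval₂_comp_left ι C X p

lemma ι_reflect (p : MvPolynomial (Fin n) ℂ) :
    ι (reflectPoly p) = (∏ i, ι (X i) ^ p.degreeOf i) *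
      eval₂ (((ι (n := n)).comp C).comp (starRingEnd ℂ)) (fun i => (ι (X i))⁻¹) p := by
  rw [ι_eq_eval₂, eval₂_reflectPoly _ _ ιX_ne]

lemma reflect_mul {p q : MvPolynomial (Fin n) ℂ} (hp : p ≠ 0) (hq : q ≠ 0) :
    reflectPoly (p * q) = reflectPoly p * reflectPoly q := by
  apply ι_inj
  rw [map_mul, ι_reflect, ι_reflect, ι_reflect]
  rw [Finset.prod_congr rfl (fun i (_ : i ∈ Finset.univ) => by
    rw [degreeOf_mul_eq'' hp hq i, pow_add]), Finset.prod_mul_distrib, eval₂_mul]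
  ring

lemma coeff_reflect_top {q : MvPolynomial (Fin n) ℂ} (h0 : constantCoeff q ≠ 0) :
    coeff (Finsupp.equivFunOnFinite.symm fun i => q.degreeOf i) (reflectPoly q) =
      starRingEnd ℂ (constantCoeff q) := by
  rw [reflectPoly]
  rw [show (coeff (Finsupp.equivFunOnFinite.symm fun i => q.degreeOf i)
    (∑ a ∈ q.support, monomial (Finsupp.equivFunOnFinite.symm fun i => q.degreeOf i - a i)
      (starRingEnd ℂ (q.coeff a)))) = ∑ a ∈ q.support,
        coeff (Finsupp.equivFunOnFinite.symm fun i => q.degreeOf i)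
          (monomial (Finsupp.equivFunOnFinite.symm fun i => q.degreeOf i - a i)
            (starRingEnd ℂ (q.coeff a))) from by
      simp [MvPolynomial.coeff_sum]]
  rw [Finset.sum_eq_single (0 : Fin n →₀ ℕ)]
  · rw [coeff_monomial, if_pos]
    · rw [constantCoeff_eq]
    · ext i; simp
  · intro a ha hane
    rw [coeff_monomial, if_neg]
    intro hEq
    apply hane
    have := congrArg (fun f => Finsupp.equivFunOnFinite f) hEq
    simp only [Equiv.apply_symm_apply] at this
    ext i
    have hi := congrFun this i
    have hle := mem_support_le_degreeOf ha i
    simpa using by omega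
  · intro h
    exact absurd (by rwa [mem_support_iff, ← constantCoeff_eq]) h

lemma reflect_ne_zero {q : MvPolynomial (Fin n) ℂ} (h0 : constantCoeff q ≠ 0) :
    reflectPoly q ≠ 0 := by
  intro h
  have := coeff_reflect_top h0
  rw [h, coeff_zero] at this
  exact h0 (by simpa using this.symm)

lemma degreeOf_reflect {q : MvPolynomial (Fin n) ℂ} (h0 : constantCoeff q ≠ 0) (i : Fin n) :
    degreeOf i (reflectPoly q) = degreeOf i q := by
  apply le_antisymm
  · rw [degreeOf_le_iff]
    intro m hm
    classical
    rw [reflectPoly] at hm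
    obtain ⟨a, ha, hma⟩ := Finset.mem_biUnion.mp (MvPolynomial.support_sum hm)
    have hms : m = Finsupp.equivFunOnFinite.symm fun i => q.degreeOf i - a i := by
      by_cases hz : starRingEnd ℂ (q.coeff a) = 0
      · simp [support_monomial, hz] at hma
      · simpa [support_monomial, hz] using hma
    have hmi : m i = q.degreeOf i - a i := by rw [hms]; simp
    omega
  · have hmem : (Finsupp.equivFunOnFinite.symm fun i => q.degreeOf i) ∈
        (reflectPoly q).support := by
      rw [mem_support_iff, coeff_reflect_top h0]
      simpa using h0
    simpa using mem_support_le_degreeOf hmem i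

lemma conj_comp : (((ι (n := n)).comp C).comp (starRingEnd ℂ)).comp (starRingEnd ℂ) =
    (ι (n := n)).comp C := by
  ext x
  simp

lemma reflect_reflect {q : MvPolynomial (Fin n) ℂ} (h0 : constantCoeff q ≠ 0) :
    reflectPoly (reflectPoly q) = q := by
  apply ι_inj
  rw [ι_reflect, eval₂_reflectPoly _ _ (fun i => inv_ne_zero (ιX_ne i)), conj_comp]
  simp only [inv_inv]
  rw [← ι_eq_eval₂]
  rw [Finset.prod_congr rfl (fun i (_ : i ∈ Finset.univ) => by rw [degreeOf_reflect h0 i])]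
  rw [← mul_assoc, ← Finset.prod_mul_distrib]
  rw [Finset.prod_congr rfl (fun i (_ : i ∈ Finset.univ) => by
    rw [inv_pow, mul_inv_cancel₀ (pow_ne_zero _ (ιX_ne i))]), Finset.prod_const_one, one_mul]

lemma reflect_C (τ : ℂ) : reflectPoly (C (σ := Fin n) τ) = C (starRingEnd ℂ τ) := by
  rcases eq_or_ne τ 0 with rfl | hτ
  · simp [reflectPoly]
  · classical
    rw [reflectPoly, C_apply, support_monomial, if_neg hτ, Finset.sum_singleton]
    have h1 : (Finsupp.equivFunOnFinite.symm fun i =>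
        degreeOf i (monomial (0 : Fin n →₀ ℕ) τ) - (0 : Fin n →₀ ℕ) i) = 0 := by
      ext i; simp [degreeOf_monomial_eq _ _ hτ]
    rw [h1, coeff_monomial, if_pos rfl, ← C_apply]

lemma reflect_smul {τ : ℂ} (hτ : τ ≠ 0) (r : MvPolynomial (Fin n) ℂ) :
    reflectPoly (τ • r) = (starRingEnd ℂ τ) • reflectPoly r := by
  rcases eq_or_ne r 0 with rfl | hr
  · simp only [smul_zero]
    rw [show reflectPoly (0 : MvPolynomial (Fin n) ℂ) = 0 from by simp [reflectPoly], smul_zero]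
  · rw [smul_eq_C_mul, reflect_mul (by simpa using hτ) hr, reflect_C, ← smul_eq_C_mul]

lemma isUnit_eq_C {w : MvPolynomial (Fin n) ℂ} (h : IsUnit w) : ∃ c : ℂ, w = C c := by
  obtain ⟨v, hv⟩ := isUnit_iff_exists_inv.mp h
  have hwne : w ≠ 0 := by rintro rfl; simp at hv
  have hvne : v ≠ 0 := by rintro rfl; simp at hv
  have hdeg : ∀ i, degreeOf i w = 0 := by
    intro i
    have := degreeOf_mul_eq'' hwne hvne i
    rw [hv] at this
    have h1 : degreeOf i (1 : MvPolynomial (Fin n) ℂ) = 0 := by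
      rw [show (1 : MvPolynomial (Fin n) ℂ) = C 1 from (C_1).symm, degreeOf_C]
    omega
  refine ⟨coeff 0 w, MvPolynomial.ext _ _ fun m => ?_⟩
  rcases eq_or_ne m 0 with rfl | hm
  · simp [coeff_C]
  · rw [coeff_C, if_neg (Ne.symm hm)]
    by_contra hc
    have hmem : m ∈ w.support := mem_support_iff.mpr hc
    apply hm
    ext i
    have := mem_support_le_degreeOf hmem i
    have h2 := hdeg i
    simp only [Finsupp.coe_zero, Pi.zero_apply]
    omega

lemma eval_reflect_torus {z : Fin n → ℂ} (hz : ∀ i, ‖z i‖ = 1) (p : MvPolynomial (Fin n) ℂ) :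
    eval z (reflectPoly p) = (∏ i, z i ^ p.degreeOf i) * starRingEnd ℂ (eval z p) := by
  have hzne : ∀ i, z i ≠ 0 := fun i =>
    norm_ne_zero_iff.mp (by rw [hz i]; exact one_ne_zero)
  rw [← eval₂_id, eval₂_reflectPoly _ _ hzne, RingHom.id_comp]
  congr 1
  have hfun : (fun i => (z i)⁻¹) = fun i => starRingEnd ℂ (z i) := by
    funext i
    exact Complex.inv_eq_conj (hz i)
  rw [hfun]
  have h2 := eval₂_comp_left (starRingEnd ℂ) (RingHom.id ℂ) z p
  rw [eval₂_id, RingHom.comp_id] at h2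
  exact h2.symm

end S18

/-- If `p` is a nonconstant polynomial, nonvanishing on `𝔻ⁿ`, with no
nonconstant essentially `𝕋ⁿ`-symmetric divisor, then `p` and `p^~` are relatively prime,
and `Z_p ∩ 𝕋ⁿ` (the singular set of `z^h p^~/p`) is contained in `Z_p ∩ Z_{p^~}`. -/


theorem statement18 {n : ℕ} (p : MvPolynomial (Fin n) ℂ)
    (hpc : ¬ ∃ c : ℂ, p = C c)
    (hp : ∀ z ∈ polydisk n, eval z p ≠ 0)
    (hnosym : ∀ r : MvPolynomial (Fin n) ℂ, r ∣ p →
        (∃ τ : ℂ, ‖τ‖ = 1 ∧ reflectPoly (τ • r) = τ • r) → ∃ c : ℂ, r = C c) :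
    RelPrimePoly p (reflectPoly p) ∧
      zeroSet p ∩ torus n ⊆ zeroSet p ∩ zeroSet (reflectPoly p) := by
  classical
  have h0 : constantCoeff p ≠ 0 := by
    have hmem : (fun _ => (0:ℂ)) ∈ polydisk n := by intro i; simp
    have := hp (fun _ => 0) hmem
    rwa [show eval (fun _ => (0:ℂ)) p = constantCoeff p from by rw [← eval_zero']] at this
  have hpne : p ≠ 0 := fun h => h0 (by simp [h])
  constructor
  · letI : GCDMonoid (MvPolynomial (Fin n) ℂ) :=
      UniqueFactorizationMonoid.toGCDMonoid (MvPolynomial (Fin n) ℂ)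
    intro d hdp hdr
    set g := gcd p (reflectPoly p) with hgdef
    have hg_dvd_p : g ∣ p := gcd_dvd_left _ _
    have hg_dvd_r : g ∣ reflectPoly p := gcd_dvd_right _ _
    have hgne : g ≠ 0 := fun h => hpne (by rw [← zero_dvd_iff, ← h]; exact hg_dvd_p)
    have hg0 : constantCoeff g ≠ 0 := by
      obtain ⟨t, ht⟩ := hg_dvd_p
      intro h; apply h0; rw [ht, map_mul, h, zero_mul]
    have hrpne : reflectPoly p ≠ 0 := S18.reflect_ne_zero h0
    have hrg_dvd_p : reflectPoly g ∣ p := by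
      obtain ⟨t, ht⟩ := hg_dvd_r
      have htne : t ≠ 0 := fun h => hrpne (by rw [ht, h, mul_zero])
      exact ⟨reflectPoly t, by rw [← S18.reflect_reflect h0, ht, S18.reflect_mul hgne htne]⟩
    have hrg_dvd_r : reflectPoly g ∣ reflectPoly p := by
      obtain ⟨t, ht⟩ := hg_dvd_p
      have htne : t ≠ 0 := fun h => hpne (by rw [ht, h, mul_zero])
      exact ⟨reflectPoly t, by rw [ht, S18.reflect_mul hgne htne]⟩
    obtain ⟨w, hw⟩ : reflectPoly g ∣ g := dvd_gcd hrg_dvd_p hrg_dvd_r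
    have hgrne : reflectPoly g ≠ 0 := S18.reflect_ne_zero hg0
    have hwne : w ≠ 0 := fun h => hgne (by rw [hw, h, mul_zero])
    have hw2 : reflectPoly g = g * reflectPoly w := by
      have := congrArg reflectPoly hw
      rwa [S18.reflect_mul hgrne hwne, S18.reflect_reflect hg0] at this
    have hunit : reflectPoly w * w = 1 := by
      apply mul_left_cancel₀ hgne
      rw [mul_one, ← mul_assoc, ← hw2, ← hw]
    obtain ⟨c, hc⟩ := S18.isUnit_eq_C (IsUnit.of_mul_eq_one (a := w) _ (by rw [mul_comm]; exact hunit))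
    have hcne : c ≠ 0 := fun h => hwne (by rw [hc, h, map_zero])
    have hgr_eq : reflectPoly g = c⁻¹ • g := by
      rw [smul_eq_C_mul]
      apply mul_right_cancel₀ (show (C c : MvPolynomial (Fin n) ℂ) ≠ 0 from fun h => hcne (by
        have := congrArg constantCoeff h; simpa using this))
      rw [← hc, ← hw, mul_assoc, mul_comm g w, ← mul_assoc, hc, ← C_mul,
        inv_mul_cancel₀ hcne, C_1, one_mul]
    set c' := c⁻¹ with hc'def
    have hc'ne : c' ≠ 0 := inv_ne_zero hcne
    have habs : starRingEnd ℂ c' * c' = 1 := by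
      have h2 : g = reflectPoly (reflectPoly g) := (S18.reflect_reflect hg0).symm
      rw [hgr_eq, S18.reflect_smul hc'ne, hgr_eq, smul_smul] at h2
      obtain ⟨m, hm⟩ := MvPolynomial.ne_zero_iff.mp hgne
      have h3 := congrArg (coeff m) h2
      rw [coeff_smul, smul_eq_mul] at h3
      have := mul_right_cancel₀ hm (by rw [← h3, one_mul] : 1 * coeff m g = _)
      exact this.symm
    have hnormc' : ‖c'‖ = 1 := by
      have h4 : (Complex.normSq c' : ℂ) = 1 := by rw [← Complex.mul_conj, mul_comm]; exact habs
      have h5 : Complex.normSq c' = 1 := by exact_mod_cast h4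
      rw [← Complex.sq_norm] at h5
      nlinarith [norm_nonneg c']
    set τ := Complex.exp (Complex.log c' / 2) with hτdef
    have hτ2 : τ * τ = c' := by
      rw [← Complex.exp_add, add_halves, Complex.exp_log hc'ne]
    have hτn : ‖τ‖ = 1 := by
      rw [hτdef, Complex.norm_exp]
      have : (Complex.log c' / 2).re = 0 := by
        have : (Complex.log c').re = 0 := by
          rw [Complex.log_re, hnormc', Real.log_one]
        simp [Complex.div_re, this]
      rw [this, Real.exp_zero]
    have hτne : τ ≠ 0 := fun h => by rw [h] at hτn; simp at hτn
    have hτconj : starRingEnd ℂ τ * τ = 1 := by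
      rw [mul_comm, Complex.mul_conj]
      norm_cast
      rw [← Complex.sq_norm, hτn, one_pow]
    have hsym : reflectPoly (τ • g) = τ • g := by
      rw [S18.reflect_smul hτne, hgr_eq, smul_smul]
      congr 1
      calc starRingEnd ℂ τ * c' = starRingEnd ℂ τ * (τ * τ) := by rw [hτ2]
        _ = (starRingEnd ℂ τ * τ) * τ := by ring
        _ = τ := by rw [hτconj, one_mul]
    obtain ⟨c₀, hc₀⟩ := hnosym g hg_dvd_p ⟨τ, hτn, hsym⟩
    have hc₀ne : c₀ ≠ 0 := fun h => hgne (by rw [hc₀, h, C_0])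
    have hgu : IsUnit g := IsUnit.of_mul_eq_one (C c₀⁻¹)
      (by rw [hc₀, ← C_mul, mul_inv_cancel₀ hc₀ne, C_1])
    exact isUnit_of_dvd_unit (dvd_gcd hdp hdr) hgu
  · rintro z ⟨hz1, hz2⟩
    refine ⟨hz1, ?_⟩
    show eval z (reflectPoly p) = 0
    rw [S18.eval_reflect_torus hz2, hz1, map_zero, mul_zero]
end
end
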